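/- arXiv:1708.08723 — 9 statements merged into one kernel-verified Lean document; each statement's English description precedes it below -/
import Mathlib

section
/- If the complete graph K_n admits an outer k-planar drawing (a convex drawing in which every edge is crossed by at most k other edges), then n ≤ ⌊√(4k+1)⌋ + 2. -/
open Finset

open scoped Classical

/-- Two chords `{a,b}` and `{c,d}` on points in convex position (labeled by `Fin n`
in cyclic order) cross iff their endpoints interleave. -/
def Interleave {n : ℕ} (a b c d : Fin n) : Prop :=
  (min a b < min c d ∧ min c d < max a b ∧ max a b < max c d) ∨
  (min c d < min a b ∧ min a b < max c d ∧ max c d < max a b)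

/-- Crossing of chords, as unordered pairs. -/
def Sym2Cross {n : ℕ} (e f : Sym2 (Fin n)) : Prop :=
  ∃ a b c d : Fin n, e = s(a, b) ∧ f = s(c, d) ∧ Interleave a b c d

/-- A graph is outer `k`-planar if its vertices can be placed in convex (cyclic)
position so that every edge is crossed by at most `k` other edges. -/
def IsOuterKPlanar {V : Type*} [Fintype V] [DecidableEq V] (k : ℕ) (G : SimpleGraph V) : Prop :=
  ∃ σ : V ≃ Fin (Fintype.card V),
    ∀ e ∈ G.edgeFinset,
      (G.edgeFinset.filter (fun f => f ≠ e ∧ Sym2Cross (e.map σ) (f.map σ))).card ≤ k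

/-- A graph is outer `k`-quasi-planar if its vertices can be placed in convex
position so that no `k` edges pairwise cross. -/
def IsOuterKQuasiPlanar {V : Type*} [Fintype V] [DecidableEq V] (k : ℕ) (G : SimpleGraph V) : Prop :=
  ∃ σ : V ≃ Fin (Fintype.card V),
    ∀ S : Finset (Sym2 V), ↑S ⊆ G.edgeSet →
      (∀ e ∈ S, ∀ f ∈ S, e ≠ f → Sym2Cross (e.map σ) (f.map σ)) → S.card < k

/-!
Place the vertices of `K_n` at positions `0, …, n-1` and take the chord from `0` to
`a + 1`, where `a = ⌊(n-2)/2⌋`. Every chord from one of the `a` points strictly inside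
to one of the `n - 2 - a` points beyond `a + 1` crosses it, so
`⌊(n-2)/2⌋ ⌈(n-2)/2⌉ ≤ k`, and since `⌊m/2⌋ ⌈m/2⌉ = ⌊m²/4⌋` this gives
`(n-2)² ≤ 4k + 1`.
-/

lemma Interleave.of_lt {N : ℕ} {a b c d : Fin N} (hac : a < c) (hcb : c < b) (hbd : b < d) :
    Interleave a b c d := by
  left
  rw [min_eq_left (hac.trans hcb).le, max_eq_right (hac.trans hcb).le,
    min_eq_left (hcb.trans hbd).le, max_eq_right (hcb.trans hbd).le]
  exact ⟨hac, hcb, hbd⟩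

lemma Sym2.mk_injOn_lt {α : Type*} [LinearOrder α] :
    Set.InjOn (fun p : α × α => s(p.1, p.2)) {p | p.1 < p.2} := by
  rintro ⟨c, d⟩ hcd ⟨c', d'⟩ hcd' h
  have hinf := congrArg Sym2.inf h
  have hsup := congrArg Sym2.sup h
  simp only [Set.mem_ofPred_eq] at hcd hcd'
  simp only [Sym2.inf_mk, Sym2.sup_mk, inf_of_le_left hcd.le, sup_of_le_right hcd.le,
    inf_of_le_left hcd'.le, sup_of_le_right hcd'.le] at hinf hsup
  rw [hinf, hsup]

theorem IsOuterKPlanar.mul_le {V : Type*} [Fintype V] [DecidableEq V] {k : ℕ}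
    (h : IsOuterKPlanar k (⊤ : SimpleGraph V)) {i j : ℕ} (hij : i < j)
    (hj : j < Fintype.card V) :
    (j - i - 1) * (Fintype.card V - 1 - j) ≤ k := by
  obtain ⟨σ, hσ⟩ := h
  set p : Fin (Fintype.card V) := ⟨i, hij.trans hj⟩
  set q : Fin (Fintype.card V) := ⟨j, hj⟩
  have hpq : p < q := hij
  set e := s(σ.symm p, σ.symm q)
  have hemap : e.map σ = s(p, q) := by simp [e]
  have hcount := hσ e (by simpa [e] using σ.symm.injective.ne hpq.ne)
  calc (j - i - 1) * (Fintype.card V - 1 - j)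
      = #(Ioo p q ×ˢ Ioi q) := by rw [card_product, Fin.card_Ioo, Fin.card_Ioi]
    _ ≤ _ := ?_
    _ ≤ k := hcount
  refine card_le_card_of_injOn (fun cd => s(σ.symm cd.1, σ.symm cd.2)) ?_ ?_
  · rintro ⟨c, d⟩ hcd
    simp only [coe_product, Set.mem_prod, mem_coe, mem_Ioo, mem_Ioi] at hcd
    obtain ⟨⟨hpc, hcq⟩, hqd⟩ := hcd
    have hcd : c < d := hcq.trans hqd
    simp only [mem_coe, mem_filter]
    refine ⟨by simpa using σ.symm.injective.ne hcd.ne, ?_, ?_⟩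
    · rw [Ne, Sym2.eq_iff]
      rintro (⟨hc, -⟩ | ⟨hc, -⟩)
      · exact hpc.ne' (σ.symm.injective hc)
      · exact hcq.ne (σ.symm.injective hc)
    · rw [hemap, Sym2.map_mk, σ.apply_symm_apply, σ.apply_symm_apply]
      exact ⟨p, q, c, d, rfl, rfl, Interleave.of_lt hpc hcq hqd⟩
  · refine ((Sym2.map.injective σ.symm.injective).comp_injOn Sym2.mk_injOn_lt).mono ?_
    rintro ⟨c, d⟩ hcd
    simp only [coe_product, Set.mem_prod, mem_coe, mem_Ioo, mem_Ioi] at hcd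
    exact hcd.1.2.trans hcd.2

lemma le_sqrt_of_half_mul_half_le {m k : ℕ} (h : m / 2 * (m - m / 2) ≤ k) :
    m ≤ Nat.sqrt (4 * k + 1) := by
  rw [Nat.le_sqrt]
  rcases Nat.even_or_odd' m with ⟨a, rfl | rfl⟩
  · rw [show 2 * a / 2 = a by omega, show 2 * a - a = a by omega] at h
    nlinarith
  · rw [show (2 * a + 1) / 2 = a by omega, show 2 * a + 1 - a = a + 1 by omega] at h
    nlinarith

/-- If `K_n` admits an outer `k`-planar drawing then `n ≤ ⌊√(4k+1)⌋ + 2`. -/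
theorem stmt1 (n k : ℕ) (h : IsOuterKPlanar k (⊤ : SimpleGraph (Fin n))) :
    n ≤ Nat.sqrt (4 * k + 1) + 2 := by
  rcases lt_or_ge n 2 with hn | hn
  · omega
  have hcross := h.mul_le (i := 0) (j := (n - 2) / 2 + 1) (by omega) (by simp; omega)
  rw [Fintype.card_fin, show (n - 2) / 2 + 1 - 0 - 1 = (n - 2) / 2 by omega,
    show n - 1 - ((n - 2) / 2 + 1) = n - 2 - (n - 2) / 2 by omega] at hcross
  have := le_sqrt_of_half_mul_half_le hcross
  omega
end

section
/- For every k ≥ 0, the complete graph on ⌊√(4k+1)⌋ + 2 vertices admits an outer k-planar drawing; i.e., in the convex drawing of K_n with n = ⌊√(4k+1)⌋ + 2, every edge is crossed by at most k other edges. -/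
open Finset

open scoped Classical

/-!
Place the vertices of `K_n` in convex position. A chord whose two sides contain `l` and `j`
vertices, `l + j = n - 2`, is crossed exactly by the chords with one end on each side, so by at
most `l * j ≤ (l + j)² / 4` chords. For `n = ⌊√(4k+1)⌋ + 2` this gives `4 l j ≤ 4k + 1`, i.e.
`l j ≤ k`.
-/

section Crossing

variable {n : ℕ}

theorem sym2Cross_mk_iff (a b c d : Fin n) :
    Sym2Cross s(a, b) s(c, d) ↔ Interleave a b c d := by
  refine ⟨?_, fun h => ⟨a, b, c, d, rfl, rfl, h⟩⟩
  rintro ⟨a', b', c', d', hab, hcd, h⟩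
  rw [Sym2.eq_iff] at hab hcd
  rcases hab with ⟨rfl, rfl⟩ | ⟨rfl, rfl⟩ <;>
    rcases hcd with ⟨rfl, rfl⟩ | ⟨rfl, rfl⟩ <;>
    simpa [Interleave, min_comm, max_comm] using h

theorem not_interleave_self (a c d : Fin n) : ¬Interleave a a c d := by
  simp only [Interleave, min_self, max_self]
  omega

theorem Interleave.mem_Ioo_of_lt {a b c d : Fin n} (hab : a < b) (h : Interleave a b c d) :
    (c ∈ Ioo a b ∧ d ∉ Icc a b) ∨ (d ∈ Ioo a b ∧ c ∉ Icc a b) := by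
  simp only [Interleave, min_eq_left hab.le, max_eq_right hab.le] at h
  simp only [mem_Ioo, mem_Icc, not_and_or, not_le]
  rcases le_total c d with hcd | hcd
  · simp only [min_eq_left hcd, max_eq_right hcd] at h
    omega
  · simp only [min_eq_right hcd, max_eq_left hcd] at h
    omega

theorem filter_sym2Cross_subset {a b : Fin n} (hab : a < b) :
    ({f | Sym2Cross s(a, b) f} : Finset _) ⊆
      (Ioo a b ×ˢ (Icc a b)ᶜ).image fun p => s(p.1, p.2) := by
  intro f hf
  induction f using Sym2.inductionOn with
  | hf c d =>
    rw [mem_filter, sym2Cross_mk_iff] at hf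
    rcases hf.2.mem_Ioo_of_lt hab with ⟨hc, hd⟩ | ⟨hd, hc⟩
    · exact mem_image.2 ⟨(c, d), by simp [hc, hd], rfl⟩
    · exact mem_image.2 ⟨(d, c), by simp [hc, hd], Sym2.eq_swap⟩

theorem card_filter_sym2Cross_le {a b : Fin n} (hab : a < b) :
    #{f | Sym2Cross s(a, b) f} ≤ (b - a - 1) * (n - (b + 1 - a)) := by
  calc #{f | Sym2Cross s(a, b) f}
      ≤ #(Ioo a b ×ˢ (Icc a b)ᶜ) :=
        (card_le_card (filter_sym2Cross_subset hab)).trans card_image_le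
    _ = (b - a - 1) * (n - (b + 1 - a)) := by
      rw [card_product, card_compl, Fin.card_Ioo, Fin.card_Icc, Fintype.card_fin]

theorem exists_card_filter_sym2Cross_le (e : Sym2 (Fin n)) :
    ∃ l j, l + j ≤ n - 2 ∧ #{f | Sym2Cross e f} ≤ l * j := by
  induction e using Sym2.inductionOn with
  | hf a b =>
    rcases lt_trichotomy a b with hab | rfl | hba
    · exact ⟨_, _, by omega, card_filter_sym2Cross_le hab⟩
    · refine ⟨0, 0, by omega, (card_eq_zero.2 (filter_eq_empty_iff.2 fun f _ => ?_)).le⟩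
      induction f using Sym2.inductionOn with
      | hf c d => exact (sym2Cross_mk_iff a a c d).not.2 (not_interleave_self a c d)
    · rw [Sym2.eq_swap]
      exact ⟨_, _, by omega, card_filter_sym2Cross_le hba⟩

end Crossing

theorem isOuterKPlanar_of_forall_card_filter_sym2Cross_le {V : Type*} [Fintype V] [DecidableEq V]
    {k : ℕ} (G : SimpleGraph V)
    (h : ∀ e : Sym2 (Fin (Fintype.card V)), #{f | Sym2Cross e f} ≤ k) :
    IsOuterKPlanar k G := by
  set σ := Fintype.equivFin V
  refine ⟨σ, fun e _ => le_trans ?_ (h (e.map σ))⟩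
  refine card_le_card_of_injOn (Sym2.map σ) (fun f hf => ?_)
    (Sym2.map.injective σ.injective).injOn
  simpa using (mem_filter.1 hf).2.2

theorem mul_le_of_add_le_sqrt_four_mul_add_one {k l j : ℕ} (h : l + j ≤ Nat.sqrt (4 * k + 1)) :
    l * j ≤ k := by
  have h₁ : 4 * (l * j) ≤ (l + j) ^ 2 := mul_assoc 4 l j ▸ four_mul_le_sq_add l j
  have h₂ : (l + j) ^ 2 ≤ 4 * k + 1 := (Nat.pow_le_pow_left h 2).trans (Nat.sqrt_le' _)
  omega

/-- For every `k`, the complete graph on `⌊√(4k+1)⌋ + 2` vertices is outer `k`-planar. -/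
theorem stmt2 (k : ℕ) :
    IsOuterKPlanar k (⊤ : SimpleGraph (Fin (Nat.sqrt (4 * k + 1) + 2))) := by
  refine isOuterKPlanar_of_forall_card_filter_sym2Cross_le _ fun e => ?_
  obtain ⟨l, j, hlj, hcard⟩ := exists_card_filter_sym2Cross_le e
  rw [Fintype.card_fin] at hlj
  exact hcard.trans (mul_le_of_add_le_sqrt_four_mul_add_one (by omega))
end

section
/- Let G be a graph admitting an outer k-planar drawing with minimum degree δ. If an edge {a,b} of the drawing has exactly l vertices strictly on one side (in the cyclic order), then the number of edges crossing {a,b} is at least δ·l − l·(l+1). -/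
open Finset

open scoped Classical

/-!
Let `S` be the `l` vertices strictly between `a` and `b` and `T = [a, b]`. A vertex of `S` has
at most `#T - 1 = l + 1` neighbours inside `T`, so at least `δ - (l + 1)` of its edges leave `T`;
each such edge has its endpoints on both sides of the chord `ab` and therefore crosses it, and
distinct such incidences give distinct edges.
-/

namespace SimpleGraph

variable {V : Type*} [Fintype V] [DecidableEq V] (G : SimpleGraph V) [DecidableRel G.Adj]

lemma degree_le_card_sub_one_add_card_neighborFinset_sdiff {T : Finset V} {v : V} (hv : v ∈ T) :
    G.degree v ≤ #T - 1 + #(G.neighborFinset v \ T) := by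
  have hinside : G.neighborFinset v ∩ T ⊆ T.erase v := fun w hw => by
    rw [mem_inter, mem_neighborFinset] at hw
    exact mem_erase.mpr ⟨hw.1.ne.symm, hw.2⟩
  rw [← card_neighborFinset_eq_degree, ← card_inter_add_card_sdiff (G.neighborFinset v) T,
    ← card_erase_of_mem hv]
  exact Nat.add_le_add_right (card_le_card hinside) _

lemma sum_card_neighborFinset_sdiff_le {S T : Finset V} (hST : S ⊆ T) (E : Finset (Sym2 V))
    (hE : ∀ v ∈ S, ∀ w, G.Adj v w → w ∉ T → s(v, w) ∈ E) :
    ∑ v ∈ S, #(G.neighborFinset v \ T) ≤ #E := by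
  rw [← card_sigma]
  refine card_le_card_of_injOn (fun p => s(p.1, p.2)) (fun p hp => ?_) (fun p hp q hq hpq => ?_)
  · simp only [coe_sigma, Set.mem_sigma_iff, mem_coe, mem_sdiff, mem_neighborFinset] at hp
    exact hE p.1 hp.1 p.2 hp.2.1 hp.2.2
  · simp only [coe_sigma, Set.mem_sigma_iff, mem_coe, mem_sdiff] at hp hq
    obtain ⟨v, w⟩ := p
    obtain ⟨v', w'⟩ := q
    rcases Sym2.eq_iff.mp hpq with ⟨rfl, rfl⟩ | ⟨rfl, -⟩
    · rfl
    · exact absurd (hST hp.1) hq.2.2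

end SimpleGraph

lemma sym2Cross_of_mem_Ioo_of_notMem_Icc {n : ℕ} {a b v w : Fin n} (hv : v ∈ Ioo a b)
    (hw : w ∉ Icc a b) : Sym2Cross s(a, b) s(v, w) := by
  rw [mem_Ioo] at hv
  rw [mem_Icc, not_and_or, not_le, not_le] at hw
  refine ⟨a, b, v, w, rfl, rfl, ?_⟩
  have hab : a ≤ b := (hv.1.trans hv.2).le
  rcases hw with hwa | hbw
  · right
    rw [min_eq_left hab, max_eq_right hab, min_eq_right (hwa.trans hv.1).le,
      max_eq_left (hwa.trans hv.1).le]
    exact ⟨hwa, hv.1, hv.2⟩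
  · left
    rw [min_eq_left hab, max_eq_right hab, min_eq_left (hv.2.trans hbw).le,
      max_eq_right (hv.2.trans hbw).le]
    exact ⟨hv.1, hv.2, hbw⟩

theorem stmt3_general (n δ : ℕ) (G : SimpleGraph (Fin n)) [DecidableRel G.Adj]
    (hδ : ∀ v : Fin n, δ ≤ G.degree v)
    (a b : Fin n) (l : ℕ)
    (hl : l = (Finset.univ.filter (fun c : Fin n => a < c ∧ c < b)).card) :
    δ * l - l * (l + 1) ≤
      (G.edgeFinset.filter (fun f => Sym2Cross s(a, b) f)).card := by
  have hS : univ.filter (fun c : Fin n => a < c ∧ c < b) = Ioo a b := by ext; simp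
  rw [hS] at hl
  have hdeg (v) (hv : v ∈ Ioo a b) : G.degree v ≤ (l + 1) + #(G.neighborFinset v \ Icc a b) := by
    have := G.degree_le_card_sub_one_add_card_neighborFinset_sdiff (Ioo_subset_Icc_self hv)
    have := card_Ioo_eq_card_Icc_sub_two a b
    omega
  have hcross := G.sum_card_neighborFinset_sdiff_le Ioo_subset_Icc_self
    (G.edgeFinset.filter (fun f => Sym2Cross s(a, b) f)) fun v hv w hvw hw =>
      mem_filter.mpr ⟨G.mem_edgeFinset.mpr hvw, sym2Cross_of_mem_Ioo_of_notMem_Icc hv hw⟩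
  have hsum : δ * l ≤ l * (l + 1) + ∑ v ∈ Ioo a b, #(G.neighborFinset v \ Icc a b) :=
    calc δ * l = ∑ _v ∈ Ioo a b, δ := by rw [sum_const, ← hl, smul_eq_mul, mul_comm]
      _ ≤ ∑ v ∈ Ioo a b, ((l + 1) + #(G.neighborFinset v \ Icc a b)) :=
        sum_le_sum fun v hv => (hδ v).trans (hdeg v hv)
      _ = l * (l + 1) + ∑ v ∈ Ioo a b, #(G.neighborFinset v \ Icc a b) := by
        rw [sum_add_distrib, sum_const, smul_eq_mul, ← hl]
  omega

/-- In an outer `k`-planar drawing of a graph with minimum degree `δ`, an edge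
`{a,b}` with exactly `l` vertices strictly on one side is crossed by at least
`δ * l - l * (l + 1)` edges. -/
theorem stmt3 (n k δ : ℕ) (G : SimpleGraph (Fin n)) [DecidableRel G.Adj]
    (hk : ∀ e ∈ G.edgeFinset,
      (G.edgeFinset.filter (fun f => f ≠ e ∧ Sym2Cross e f)).card ≤ k)
    (hδ : ∀ v : Fin n, δ ≤ G.degree v)
    (a b : Fin n) (hab : a < b) (hadj : G.Adj a b) (l : ℕ)
    (hl : l = (Finset.univ.filter (fun c : Fin n => a < c ∧ c < b)).card) :
    δ * l - l * (l + 1) ≤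
      (G.edgeFinset.filter (fun f => Sym2Cross s(a, b) f)).card :=
  stmt3_general n δ G hδ a b l hl
end

section
/- Every graph admitting an outer k-planar drawing is (⌊√(4k+1)⌋ + 1)-degenerate: every subgraph contains a vertex of degree at most ⌊√(4k+1)⌋ + 1. -/
/-!
Put the vertices on a line and suppose every vertex of `t` has at least `δ ≥ 2q` neighbours in
`t`, where `k < q (δ - 1 - q)`. Say an edge spans the vertices of `t` strictly between its ends.
The leftmost vertex and its farthest neighbour span at least `δ - 1 ≥ q` vertices; among the
edges spanning at least `q` vertices take one, `uv`, spanning the fewest. Every other edge nested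
under `uv` spans fewer than `q` vertices, so the `i`-th vertex between `u` and `v` has at most
`min q (i + 1)` neighbours on its left within `[u, v]`, and likewise on its right. All its other
neighbours lie outside `[u, v]`, and those edges cross `uv`. Summing over the `n ≥ q` vertices
between `u` and `v` gives `n δ ≤ 2 n q - q (q - 1) + k`, which contradicts `k < q (δ - 1 - q)`
because `(n - q) (δ - 2q) ≥ 0`. The bound comes from `δ = ⌊√(4k+1)⌋ + 2` and
`q = ⌊(δ - 1) / 2⌋`.
-/

open Finset

open scoped Classical

namespace OuterKPlanar

open Function

lemma sym2Cross_of_lt_of_lt {n : ℕ} {a c z w : Fin n} (haz : a < z) (hzc : z < c)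
    (hw : w < a ∨ c < w) : Sym2Cross s(a, c) s(z, w) := by
  refine ⟨a, c, z, w, rfl, rfl, ?_⟩
  simp only [Interleave, min_def, max_def]
  split_ifs <;> omega

theorem sum_card_filter_lt_eq_sum_range {α β M : Type*} [LinearOrder β] [AddCommMonoid M]
    {f : α → β} (hf : Injective f) (s : Finset α) (g : ℕ → M) :
    ∑ x ∈ s, g #(s.filter (f · < f x)) = ∑ i ∈ range #s, g i := by
  induction s using Finset.induction_on_max_value f with
  | empty => simp
  | insert a s ha hmax ih =>
    have hlt : ∀ x ∈ s, f x < f a := fun x hx =>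
      (hmax x hx).lt_of_ne (hf.ne (ne_of_mem_of_not_mem hx ha))
    have hfa : (insert a s).filter (f · < f a) = s := by
      ext x
      by_cases hx : x = a
      · simp [hx, ha]
      · simp only [mem_filter, mem_insert, hx, false_or, and_iff_left_iff_imp]
        exact hlt x
    have hfx : ∀ x ∈ s, (insert a s).filter (f · < f x) = s.filter (f · < f x) := by
      intro x hx
      rw [filter_insert, if_neg (not_lt.2 (hmax x hx))]
    rw [sum_insert ha, card_insert_of_notMem ha, sum_range_succ, hfa, sum_congr rfl fun x hx =>
      congrArg g (congrArg card (hfx x hx)), ih, add_comm]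

lemma two_mul_sum_range_min_add {q n : ℕ} (hqn : q ≤ n) :
    2 * ∑ j ∈ range n, min q (j + 1) + q * q = (2 * n + 1) * q := by
  induction n, hqn using Nat.le_induction with
  | base =>
    have hmin : ∑ j ∈ range q, min q (j + 1) = ∑ j ∈ range (q + 1), j := by
      rw [sum_range_succ']
      exact sum_congr rfl fun j hj => min_eq_right (mem_range.1 hj)
    have := sum_range_id_mul_two (q + 1)
    rw [hmin]
    simp only [add_tsub_cancel_right] at this
    nlinarith
  | succ n hqn ih =>
    rw [sum_range_succ, min_eq_left (by omega)]
    linarith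

lemma lt_of_lt_mul_sub {k q m : ℕ} (h : k < q * (m - q)) : q < m := by
  by_contra hm
  rw [Nat.sub_eq_zero_of_le (not_lt.1 hm), mul_zero] at h
  omega

section Layout

variable {V : Type*} {p : V → ℕ} {H : SimpleGraph V} {t : Finset V} {k q δ : ℕ}

noncomputable def between (p : V → ℕ) (t : Finset V) (a c : V) : Finset V :=
  t.filter fun z => p a < p z ∧ p z < p c

noncomputable def nbrsIn (H : SimpleGraph V) (t : Finset V) (z : V) : Finset V :=
  t.filter (H.Adj z)

noncomputable def leftNbrs (p : V → ℕ) (H : SimpleGraph V) (t : Finset V) (a z : V) :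
    Finset V :=
  (nbrsIn H t z).filter fun w => p a ≤ p w ∧ p w < p z

noncomputable def rightNbrs (p : V → ℕ) (H : SimpleGraph V) (t : Finset V) (c z : V) :
    Finset V :=
  (nbrsIn H t z).filter fun w => p z < p w ∧ p w ≤ p c

noncomputable def outerNbrs (p : V → ℕ) (H : SimpleGraph V) (t : Finset V) (a c z : V) :
    Finset V :=
  (nbrsIn H t z).filter fun w => p w < p a ∨ p c < p w

/-- In a drawing with the vertices on a line at positions `p`, the edges joining a vertex strictly
inside the span of an edge `ac` to a vertex strictly outside it are exactly those crossing `ac`. -/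
def CrossingBound (k : ℕ) (p : V → ℕ) (H : SimpleGraph V) (t : Finset V) : Prop :=
  ∀ a c, H.Adj a c → p a < p c → ∑ z ∈ between p t a c, #(outerNbrs p H t a c z) ≤ k

@[simp]
lemma mem_between {a c z : V} : z ∈ between p t a c ↔ z ∈ t ∧ p a < p z ∧ p z < p c :=
  mem_filter

@[simp]
lemma mem_nbrsIn {z w : V} : w ∈ nbrsIn H t z ↔ w ∈ t ∧ H.Adj z w :=
  mem_filter

lemma card_nbrsIn_le (hp : Injective p) (a c z : V) :
    #(nbrsIn H t z) ≤
      #(leftNbrs p H t a z) + #(rightNbrs p H t c z) + #(outerNbrs p H t a c z) := by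
  refine (card_le_card fun w hw => ?_).trans
    ((card_union_le _ _).trans (Nat.add_le_add_right (card_union_le _ _) _))
  have hwz : p w ≠ p z := hp.ne (mem_nbrsIn.1 hw).2.ne'
  simp only [mem_union, leftNbrs, rightNbrs, outerNbrs, mem_filter, hw, true_and]
  omega

lemma card_leftNbrs_le (hp : Injective p) {a c z : V} (hz : z ∈ between p t a c) :
    #(leftNbrs p H t a z) ≤ #((between p t a c).filter (p · < p z)) + 1 := by
  refine (card_le_card fun w hw => ?_).trans (card_insert_le a _)
  by_cases hwa : w = a
  · simp [hwa]
  obtain ⟨⟨hwt, -⟩, haw, hwz⟩ := by simpa only [leftNbrs, mem_filter, mem_nbrsIn] using hw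
  have := hp.ne hwa
  have := (mem_between.1 hz).2.2
  exact mem_insert_of_mem (mem_filter.2 ⟨mem_between.2 ⟨hwt, by omega, by omega⟩, hwz⟩)

lemma card_rightNbrs_le (hp : Injective p) {a c z : V} (hz : z ∈ between p t a c) :
    #(rightNbrs p H t c z) ≤ #((between p t a c).filter (p z < p ·)) + 1 := by
  refine (card_le_card fun w hw => ?_).trans (card_insert_le c _)
  by_cases hwc : w = c
  · simp [hwc]
  obtain ⟨⟨hwt, -⟩, hzw, hwc'⟩ := by simpa only [rightNbrs, mem_filter, mem_nbrsIn] using hw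
  have := hp.ne hwc
  have := (mem_between.1 hz).2.1
  exact mem_insert_of_mem (mem_filter.2 ⟨mem_between.2 ⟨hwt, by omega, by omega⟩, hzw⟩)

lemma exists_card_sub_one_le_card_between_right (hp : Injective p) {S : Finset V} (hS : S ⊆ t)
    (hne : S.Nonempty) {z : V} (hz : ∀ w ∈ S, p z < p w) :
    ∃ c ∈ S, #S - 1 ≤ #(between p t z c) := by
  obtain ⟨c, hc, hmax⟩ := S.exists_max_image p hne
  refine ⟨c, hc, (card_erase_of_mem hc).symm.le.trans (card_le_card fun w hw => ?_)⟩
  obtain ⟨hwc, hw⟩ := mem_erase.1 hw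
  exact mem_between.2 ⟨hS hw, hz w hw, (hmax w hw).lt_of_ne (hp.ne hwc)⟩

lemma exists_card_sub_one_le_card_between_left (hp : Injective p) {S : Finset V} (hS : S ⊆ t)
    (hne : S.Nonempty) {z : V} (hz : ∀ w ∈ S, p w < p z) :
    ∃ c ∈ S, #S - 1 ≤ #(between p t c z) := by
  obtain ⟨c, hc, hmin⟩ := S.exists_min_image p hne
  refine ⟨c, hc, (card_erase_of_mem hc).symm.le.trans (card_le_card fun w hw => ?_)⟩
  obtain ⟨hwc, hw⟩ := mem_erase.1 hw
  exact mem_between.2 ⟨hS hw, (hmin w hw).lt_of_ne (hp.ne hwc).symm, hz w hw⟩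

lemma card_between_lt_card_between {u v a c : V} (ha : a ∈ t) (hc : c ∈ t) (hua : p u ≤ p a)
    (hac : p a < p c) (hcv : p c ≤ p v) (hstrict : p u < p a ∨ p c < p v) :
    #(between p t a c) < #(between p t u v) := by
  refine card_lt_card ((ssubset_iff_of_subset fun w hw => ?_).2 ?_)
  · obtain ⟨hwt, haw, hwc⟩ := mem_between.1 hw
    exact mem_between.2 ⟨hwt, by omega, by omega⟩
  · rcases hstrict with h | h
    · exact ⟨a, mem_between.2 ⟨ha, h, by omega⟩, by simp⟩
    · exact ⟨c, mem_between.2 ⟨hc, by omega, h⟩, by simp⟩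

def NestedEdgesShort (p : V → ℕ) (H : SimpleGraph V) (t : Finset V) (q : ℕ) (u v : V) :
    Prop :=
  ∀ a c, a ∈ t → c ∈ t → H.Adj a c → p u ≤ p a → p a < p c → p c ≤ p v →
    (p u < p a ∨ p c < p v) → #(between p t a c) < q

lemma card_leftNbrs_le_of_nestedEdgesShort (hp : Injective p) {u v z : V}
    (hshort : NestedEdgesShort p H t q u v)
    (hz : z ∈ between p t u v) : #(leftNbrs p H t u z) ≤ q := by
  obtain h | hne := (leftNbrs p H t u z).eq_empty_or_nonempty
  · simp [h]
  obtain ⟨c, hc, hcard⟩ := exists_card_sub_one_le_card_between_left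
    (S := leftNbrs p H t u z) hp
    ((filter_subset _ _).trans (filter_subset _ _)) hne fun w hw => (mem_filter.1 hw).2.2
  obtain ⟨⟨hct, hzc⟩, huc, hcz⟩ := by simpa only [leftNbrs, mem_filter, mem_nbrsIn] using hc
  obtain ⟨hzt, -, hzv⟩ := mem_between.1 hz
  have := hshort c z hct hzt hzc.symm huc hcz hzv.le (Or.inr hzv)
  omega

lemma card_rightNbrs_le_of_nestedEdgesShort (hp : Injective p) {u v z : V}
    (hshort : NestedEdgesShort p H t q u v)
    (hz : z ∈ between p t u v) : #(rightNbrs p H t v z) ≤ q := by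
  obtain h | hne := (rightNbrs p H t v z).eq_empty_or_nonempty
  · simp [h]
  obtain ⟨c, hc, hcard⟩ := exists_card_sub_one_le_card_between_right
    (S := rightNbrs p H t v z) hp
    ((filter_subset _ _).trans (filter_subset _ _)) hne fun w hw => (mem_filter.1 hw).2.1
  obtain ⟨⟨hct, hzc⟩, hzc', hcv⟩ := by
    simpa only [rightNbrs, mem_filter, mem_nbrsIn] using hc
  obtain ⟨hzt, huz, -⟩ := mem_between.1 hz
  have := hshort z c hzt hct hzc huz.le hzc' hcv (Or.inl huz)
  omega

lemma false_of_nestedEdgesShort (hp : Injective p) (hcross : CrossingBound k p H t)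
    (hdeg : ∀ v ∈ t, δ ≤ #(nbrsIn H t v)) (hkq : k < q * (δ - 1 - q)) (hqδ : 2 * q ≤ δ)
    {u v : V} (huv : H.Adj u v) (hlt : p u < p v) (hq : q ≤ #(between p t u v))
    (hshort : NestedEdgesShort p H t q u v) : False := by
  have hcover : ∀ z ∈ between p t u v,
      δ ≤ min q (#((between p t u v).filter (p · < p z)) + 1) +
        min q (#((between p t u v).filter (p z < p ·)) + 1) + #(outerNbrs p H t u v z) := by
    intro z hz
    have hsplit := card_nbrsIn_le hp (H := H) (t := t) u v z
    have hleft := card_leftNbrs_le hp (H := H) hz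
    have hright := card_rightNbrs_le hp (H := H) hz
    have hleft_q := card_leftNbrs_le_of_nestedEdgesShort hp hshort hz
    have hright_q := card_rightNbrs_le_of_nestedEdgesShort hp hshort hz
    have hz_deg := hdeg z (mem_between.1 hz).1
    omega
  have hleft := sum_card_filter_lt_eq_sum_range hp (between p t u v) fun j => min q (j + 1)
  have hright := sum_card_filter_lt_eq_sum_range (f := OrderDual.toDual ∘ p)
    (OrderDual.toDual.injective.comp hp) (between p t u v) fun j => min q (j + 1)
  simp only [comp_apply, OrderDual.toDual_lt_toDual] at hright
  have hsum := sum_le_sum hcover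
  rw [sum_const, smul_eq_mul, sum_add_distrib, sum_add_distrib, hleft, hright] at hsum
  have hgauss := two_mul_sum_range_min_add hq
  have hk := hcross u v huv hlt
  have hqδ' := lt_of_lt_mul_sub hkq
  obtain ⟨e, rfl⟩ : ∃ e, δ = 2 * q + e := ⟨δ - 2 * q, by omega⟩
  have hδ : 2 * q + e - 1 - q + 1 = q + e := by omega
  nlinarith

lemma false_of_le_card_between (hp : Injective p) (hcross : CrossingBound k p H t)
    (hdeg : ∀ v ∈ t, δ ≤ #(nbrsIn H t v)) (hkq : k < q * (δ - 1 - q)) (hqδ : 2 * q ≤ δ)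
    {u v : V} (huv : H.Adj u v) (hlt : p u < p v) (hq : q ≤ #(between p t u v)) : False := by
  induction hn : #(between p t u v) using Nat.strong_induction_on generalizing u v with
  | _ n ih =>
  refine false_of_nestedEdgesShort hp hcross hdeg hkq hqδ huv hlt hq
    fun a c ha hc hac hua hlt' hcv hstrict => ?_
  by_contra! hqac
  exact ih _ (hn ▸ card_between_lt_card_between ha hc hua hlt' hcv hstrict) hac hlt' hqac rfl

lemma exists_adj_sub_one_le_card_between (hp : Injective p) (ht : t.Nonempty)
    (hdeg : ∀ v ∈ t, δ ≤ #(nbrsIn H t v)) (hδ : 1 ≤ δ) :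
    ∃ a c, H.Adj a c ∧ p a < p c ∧ δ - 1 ≤ #(between p t a c) := by
  obtain ⟨x, hx, hmin⟩ := t.exists_min_image p ht
  have hdegx := hdeg x hx
  have hright : ∀ w ∈ nbrsIn H t x, p x < p w := fun w hw =>
    (hmin w (mem_nbrsIn.1 hw).1).lt_of_ne (hp.ne (mem_nbrsIn.1 hw).2.ne)
  obtain ⟨c, hc, hcard⟩ := exists_card_sub_one_le_card_between_right (S := nbrsIn H t x) hp
    (filter_subset _ _) (card_pos.1 (by omega)) hright
  exact ⟨x, c, (mem_nbrsIn.1 hc).2, hright c hc, by omega⟩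

theorem exists_card_nbrsIn_lt (hp : Injective p) (hcross : CrossingBound k p H t)
    (hkq : k < q * (δ - 1 - q)) (hqδ : 2 * q ≤ δ) (ht : t.Nonempty) :
    ∃ v ∈ t, #(nbrsIn H t v) < δ := by
  by_contra! hdeg
  have hqδ' := lt_of_lt_mul_sub hkq
  obtain ⟨a, c, hac, hlt, hcard⟩ := exists_adj_sub_one_le_card_between hp ht hdeg (by omega)
  exact false_of_le_card_between hp hcross hdeg hkq hqδ hac hlt (by omega)

end Layout

theorem _root_.IsOuterKPlanar.exists_crossingBound {V : Type*} [Fintype V] [DecidableEq V] {k : ℕ}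
    {G H : SimpleGraph V} (hG : IsOuterKPlanar k G) (hH : H ≤ G) :
    ∃ p : V → ℕ, Injective p ∧ ∀ t, CrossingBound k p H t := by
  obtain ⟨σ, hσ⟩ := hG
  refine ⟨fun v => σ v, Fin.val_injective.comp σ.injective, fun t a c hac hlt => ?_⟩
  rw [← card_sigma]
  refine (card_le_card_of_injOn (fun x => s(x.1, x.2)) ?_ ?_).trans
    (hσ s(a, c) (by simpa using hH hac))
  · rintro ⟨z, w⟩ hzw
    simp only [mem_coe, mem_sigma, mem_between, outerNbrs, mem_filter, mem_nbrsIn] at hzw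
    obtain ⟨⟨-, haz, hzc⟩, ⟨-, hzw⟩, hw⟩ := hzw
    refine mem_filter.2 ⟨by simpa using hH hzw, ?_, ?_⟩
    · show s(z, w) ≠ s(a, c)
      rw [Ne, Sym2.eq_iff]
      rintro (⟨rfl, -⟩ | ⟨rfl, -⟩) <;> omega
    · rw [Sym2.map_mk, Sym2.map_mk]
      exact sym2Cross_of_lt_of_lt haz hzc hw
  · rintro ⟨z₁, w₁⟩ h₁ ⟨z₂, w₂⟩ h₂ h
    simp only [coe_sigma, Set.mem_sigma_iff, mem_coe, mem_between, outerNbrs, mem_filter]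
      at h₁ h₂
    simp only [Sym2.eq_iff] at h
    obtain ⟨rfl, rfl⟩ | ⟨rfl, rfl⟩ := h
    · rfl
    · omega

lemma lt_div_two_mul_sub_div_two {k m : ℕ} (h : 4 * k + 1 < m * m) : k < m / 2 * (m - m / 2) := by
  obtain ⟨a, rfl | rfl⟩ := Nat.even_or_odd' m
  · rw [show 2 * a / 2 = a by omega, show 2 * a - a = a by omega]
    nlinarith
  · rw [show (2 * a + 1) / 2 = a by omega, show 2 * a + 1 - a = a + 1 by omega]
    nlinarith

end OuterKPlanar

/-- Outer `k`-planar graphs are `(⌊√(4k+1)⌋+1)`-degenerate: every (nonempty)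
subgraph contains a vertex of degree at most `⌊√(4k+1)⌋ + 1`. -/
theorem stmt5 (k : ℕ) {V : Type*} [Fintype V] [DecidableEq V]
    (G : SimpleGraph V) (h : IsOuterKPlanar k G)
    (t : Finset V) (ht : t.Nonempty) (H : SimpleGraph V) (hH : H ≤ G) :
    ∃ v ∈ t, (t.filter (fun u => H.Adj v u)).card ≤ Nat.sqrt (4 * k + 1) + 1 := by
  obtain ⟨p, hp, hcross⟩ := h.exists_crossingBound hH
  have hkq := OuterKPlanar.lt_div_two_mul_sub_div_two (Nat.lt_succ_sqrt (4 * k + 1))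
  obtain ⟨v, hv, hdeg⟩ := OuterKPlanar.exists_card_nbrsIn_lt
    (q := (Nat.sqrt (4 * k + 1) + 1) / 2) (δ := Nat.sqrt (4 * k + 1) + 2)
    hp (hcross t) (by simpa using hkq) (by omega) ht
  exact ⟨v, hv, Nat.le_of_lt_succ hdeg⟩
end

section
/- Let G be a graph with an outer k-planar drawing on n vertices, and suppose some edge {a,b} has between n/3 and 2n/3 vertices strictly on one side. Then G has a balanced separator of size at most k + 2: removing {a,b}'s endpoints together with one endpoint of each edge crossing {a,b} disconnects the two sides, and each remaining part has at most 2n/3 vertices. -/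
open Finset

open scoped Classical

/-- `G` has a balanced separation `(A,B)` of size at most `s`. -/
def HasBalancedSepAtMost {V : Type*} [Fintype V] [DecidableEq V]
    (G : SimpleGraph V) (s : ℕ) : Prop :=
  ∃ A B : Finset V, A ∪ B = Finset.univ ∧
    (∀ u ∈ A \ B, ∀ v ∈ B \ A, ¬ G.Adj u v) ∧
    (A ∩ B).card ≤ s ∧
    3 * (A \ B).card ≤ 2 * Fintype.card V ∧ 3 * (B \ A).card ≤ 2 * Fintype.card V

/-- The separation number of `G` is at most `s`: every subgraph of `G`
(a subgraph `H ≤ G` restricted to a vertex subset `t`) has a balanced separation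
of size at most `s`. -/
def SepNumAtMost {V : Type*} [Fintype V] [DecidableEq V]
    (G : SimpleGraph V) (s : ℕ) : Prop :=
  ∀ (t : Finset V) (H : SimpleGraph V), H ≤ G →
    ∃ A B : Finset V, A ⊆ t ∧ B ⊆ t ∧ A ∪ B = t ∧
      (∀ u ∈ A \ B, ∀ v ∈ B \ A, ¬ H.Adj u v) ∧
      (A ∩ B).card ≤ s ∧
      3 * (A \ B).card ≤ 2 * t.card ∧ 3 * (B \ A).card ≤ 2 * t.card

theorem hasBalancedSepAtMost_of_cut {V : Type*} [Fintype V] [DecidableEq V]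
    (G : SimpleGraph V) (M C : Finset V) (s : ℕ)
    (hcut : ∀ u ∈ M, ∀ v ∉ M, G.Adj u v → u ∈ C ∨ v ∈ C) (hC : C.card ≤ s)
    (hM : 3 * M.card ≤ 2 * Fintype.card V) (hMc : 3 * Mᶜ.card ≤ 2 * Fintype.card V) :
    HasBalancedSepAtMost G s := by
  refine ⟨M ∪ C, Mᶜ ∪ C, ?_, ?_, ?_, ?_, ?_⟩
  · rw [union_union_union_comm, union_compl]
    exact union_eq_left.mpr (subset_univ _)
  · intro u hu v hv huv
    simp only [mem_sdiff, mem_union, mem_compl, not_or] at hu hv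
    rcases hcut u (hu.1.resolve_right hu.2.2) v hv.2.1 huv with h | h
    · exact hu.2.2 h
    · exact hv.2.2 h
  · refine le_trans (card_le_card fun x hx => ?_) hC
    simp only [mem_inter, mem_union, mem_compl] at hx
    tauto
  · refine le_trans (Nat.mul_le_mul_left 3 (card_le_card fun x hx => ?_)) hM
    simp only [mem_sdiff, mem_union] at hx
    tauto
  · refine le_trans (Nat.mul_le_mul_left 3 (card_le_card fun x hx => ?_)) hMc
    simp only [mem_sdiff, mem_union] at hx
    tauto

theorem Finset.exists_hittingSet_card_le {V : Type*} [DecidableEq V]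
    (X : Finset (Sym2 V)) : ∃ C : Finset V, C.card ≤ X.card ∧ ∀ e ∈ X, ∃ v ∈ C, v ∈ e :=
  ⟨X.image fun e => e.out.1, card_image_le,
    fun e he => ⟨e.out.1, mem_image_of_mem _ he, Sym2.out_fst_mem e⟩⟩

theorem interleave_of_between_of_outside {n : ℕ} {a b u v : Fin n} (hu : a < u ∧ u < b)
    (hv : v < a ∨ b < v) : Interleave a b u v := by
  simp only [Interleave, Fin.lt_def, Fin.coe_min, Fin.coe_max] at *
  omega

theorem stmt7_general (n k : ℕ) (G : SimpleGraph (Fin n)) [DecidableRel G.Adj]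
    (hk : ∀ e ∈ G.edgeFinset,
      (G.edgeFinset.filter (fun f => f ≠ e ∧ Sym2Cross e f)).card ≤ k)
    (a b : Fin n) (hadj : G.Adj a b) (l : ℕ)
    (hl : l = (Finset.univ.filter (fun c : Fin n => a < c ∧ c < b)).card)
    (hlo : n ≤ 3 * l) (hhi : 3 * l ≤ 2 * n) :
    HasBalancedSepAtMost G (k + 2) := by
  set M := Finset.univ.filter (fun c : Fin n => a < c ∧ c < b)
  set X := G.edgeFinset.filter (fun f => f ≠ s(a, b) ∧ Sym2Cross s(a, b) f)
  obtain ⟨Y, hYX, hY⟩ := X.exists_hittingSet_card_le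
  have hXk : X.card ≤ k := hk _ (G.mem_edgeFinset.mpr hadj)
  refine hasBalancedSepAtMost_of_cut G M (insert a (insert b Y)) (k + 2) ?_ ?_ ?_ ?_
  · intro u hu v hv huv
    simp only [M, mem_filter, mem_univ, true_and] at hu hv
    by_cases hvab : v = a ∨ v = b
    · rcases hvab with rfl | rfl <;> simp
    have hX : s(u, v) ∈ X := by
      refine mem_filter.mpr ⟨G.mem_edgeFinset.mpr huv, ?_, a, b, u, v, rfl, rfl,
        interleave_of_between_of_outside hu ?_⟩
      · intro h
        rcases Sym2.eq_iff.mp h with ⟨rfl, -⟩ | ⟨rfl, -⟩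
        exacts [lt_irrefl _ hu.1, lt_irrefl _ hu.2]
      · simp only [Fin.lt_def, Fin.ext_iff] at hv hvab ⊢
        omega
    obtain ⟨w, hwY, hw⟩ := hY _ hX
    rcases Sym2.mem_iff.mp hw with rfl | rfl <;> simp [hwY]
  · exact (card_insert_le _ _).trans (Nat.succ_le_succ ((card_insert_le _ _).trans
      (Nat.succ_le_succ (hYX.trans hXk))))
  · rw [Fintype.card_fin, ← hl]; exact hhi
  · rw [Fintype.card_fin, card_compl, Fintype.card_fin, ← hl]; omega

/-- If in an outer `k`-planar drawing some edge `{a,b}` has between `n/3` and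
`2n/3` vertices strictly on one side, then the graph has a balanced separation
of size at most `k + 2`. -/
theorem stmt7 (n k : ℕ) (G : SimpleGraph (Fin n)) [DecidableRel G.Adj]
    (hk : ∀ e ∈ G.edgeFinset,
      (G.edgeFinset.filter (fun f => f ≠ e ∧ Sym2Cross e f)).card ≤ k)
    (a b : Fin n) (hab : a < b) (hadj : G.Adj a b) (l : ℕ)
    (hl : l = (Finset.univ.filter (fun c : Fin n => a < c ∧ c < b)).card)
    (hlo : n ≤ 3 * l) (hhi : 3 * l ≤ 2 * n) :
    HasBalancedSepAtMost G (k + 2) :=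
  stmt7_general n k G hk a b hadj l hl hlo hhi
end

section
/- Every graph admitting an outer k-planar drawing has a balanced separation of size at most 2k + 3; i.e., a separation (A,B) with |A∩B| ≤ 2k+3, |A∖B| ≤ 2n/3, and |B∖A| ≤ 2n/3. -/
open Finset

open scoped Classical

/-!
Cut the cyclic order open at an arbitrary point, so that the vertices sit at positions
`0, …, n - 1` and the edges become chords `(a, b)` with `a < b`; `A ∖ B` will be an interval
of positions and `B ∖ A` its complement. A chord separates its inside from its outside up to
its two ends and the left ends of the at most `k` chords crossing it.

Call chords of length at most `(n - 2) / 3` short. Starting from any cut `c`, take the longest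
short chord `F` over `c`: a short chord over the cut just after `F` starts at the right end of
`F` or crosses `F`, so that cut is covered by `k + 1` positions, and it lies less than `n / 3`
after `c`. If all chords are short, the interval from `0` to such a cut is balanced.
Otherwise let `E` be a shortest non-short chord. If `E` is not much longer than `2n / 3`, its
interval is moved to a balanced one at the price of `k + 1` further positions, which gives
`2k + 3`. If `E` is longer, the interval from just after the left end of `E` to such a cut stays
inside `E`, and a chord leaving it is either short, hence covered at the cut, or at least as
long as `E`, hence crossing `E`.
-/

namespace Chord

def Crosses (p q : ℕ × ℕ) : Prop :=
  p.1 < q.1 ∧ q.1 < p.2 ∧ p.2 < q.2 ∨ q.1 < p.1 ∧ p.1 < q.2 ∧ q.2 < p.2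

lemma not_crosses_self (p : ℕ × ℕ) : ¬ Crosses p p := by
  unfold Crosses; omega

def Separates (C : Finset (ℕ × ℕ)) (I S : Finset ℕ) : Prop :=
  ∀ q ∈ C, q.1 ∉ S → q.2 ∉ S → (q.1 ∈ I ↔ q.2 ∈ I)

def HasBalancedIcoSep (C : Finset (ℕ × ℕ)) (n s : ℕ) : Prop :=
  ∃ lo hi : ℕ, ∃ S : Finset ℕ, hi ≤ n ∧ n ≤ 3 * (hi - lo) ∧ 3 * (hi - lo) ≤ 2 * n ∧
    S.card ≤ s ∧ Separates C (Ico lo hi) S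

variable {C : Finset (ℕ × ℕ)} {k n : ℕ}

lemma HasBalancedIcoSep.mono {s t : ℕ} (h : HasBalancedIcoSep C n s) (hst : s ≤ t) :
    HasBalancedIcoSep C n t := by
  obtain ⟨lo, hi, S, h1, h2, h3, hS, hsep⟩ := h
  exact ⟨lo, hi, S, h1, h2, h3, hS.trans hst, hsep⟩

lemma Separates.of_agree_off {I J S D : Finset ℕ} (h : Separates C I S)
    (hIJ : ∀ x ∉ D, (x ∈ I ↔ x ∈ J)) : Separates C J (S ∪ D) := by
  intro q hq h1 h2
  simp only [mem_union, not_or] at h1 h2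
  rw [← hIJ _ h1.2, ← hIJ _ h2.2]
  exact h q hq h1.1 h2.1

lemma exists_cover_crossing {p : ℕ × ℕ} (hp : (C.filter (Crosses p)).card ≤ k) :
    ∃ T : Finset ℕ, T.card ≤ k ∧ ∀ q ∈ C, Crosses p q → q.1 ∈ T :=
  ⟨(C.filter (Crosses p)).image Prod.fst, card_image_le.trans hp,
    fun _ hq hpq => mem_image_of_mem _ (mem_filter.2 ⟨hq, hpq⟩)⟩

lemma separates_Ico_of_cover_crossing (hC : ∀ q ∈ C, q.1 < q.2) {p : ℕ × ℕ} {T : Finset ℕ}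
    (hT : ∀ q ∈ C, Crosses p q → q.1 ∈ T) :
    Separates C (Ico p.1 p.2) (insert p.1 (insert p.2 T)) := by
  intro q hq h1 h2
  simp only [mem_insert, not_or] at h1 h2
  have := hC q hq
  simp only [mem_Ico]
  by_contra hsep
  exact h1.2.2 (hT q hq (by unfold Crosses; omega))

lemma exists_balanced_Ico_near {m u v : ℕ} (hn : 2 ≤ n) (huv : u ≤ v) (hv : v ≤ n)
    (h1 : n ≤ 3 * (v - u) + 3 * m) (h2 : 3 * (v - u) ≤ 2 * n + 3 * m) :
    ∃ lo hi : ℕ, ∃ D : Finset ℕ, hi ≤ n ∧ n ≤ 3 * (hi - lo) ∧ 3 * (hi - lo) ≤ 2 * n ∧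
      D.card ≤ m ∧ ∀ x ∉ D, (x ∈ Ico u v ↔ x ∈ Ico lo hi) := by
  by_cases hlong : 2 * n < 3 * (v - u)
  · refine ⟨u, u + 2 * n / 3, Ico (u + 2 * n / 3) v, by omega, by omega, by omega, ?_, ?_⟩
    · rw [Nat.card_Ico]; omega
    · intro x hx; simp only [mem_Ico, not_and, not_lt] at hx ⊢; omega
  by_cases hshort : 3 * (v - u) < n
  · by_cases hfit : u + (n + 2) / 3 ≤ n
    · refine ⟨u, u + (n + 2) / 3, Ico v (u + (n + 2) / 3), hfit, by omega, by omega, ?_, ?_⟩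
      · rw [Nat.card_Ico]; omega
      · intro x hx; simp only [mem_Ico, not_and, not_lt] at hx ⊢; omega
    · refine ⟨v - (n + 2) / 3, v, Ico (v - (n + 2) / 3) u, hv, by omega, by omega, ?_, ?_⟩
      · rw [Nat.card_Ico]; omega
      · intro x hx; simp only [mem_Ico, not_and, not_lt] at hx ⊢; omega
  · exact ⟨u, v, ∅, hv, by omega, by omega, by simp, fun x _ => Iff.rfl⟩

lemma exists_cut_covering_short (hk : ∀ p ∈ C, (C.filter (Crosses p)).card ≤ k) (ℓ c : ℕ) :
    ∃ g : ℕ, ∃ T : Finset ℕ, c ≤ g ∧ g ≤ c + ℓ ∧ T.card ≤ k + 1 ∧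
      ∀ q ∈ C, q.2 - q.1 ≤ ℓ → q.1 < g → g ≤ q.2 → q.1 ∈ T := by
  set D := C.filter fun q => q.2 - q.1 ≤ ℓ ∧ q.1 < c ∧ c ≤ q.2
  rcases D.eq_empty_or_nonempty with hD | hD
  · refine ⟨c, ∅, le_rfl, by omega, by simp, fun q hq hℓ h1 h2 => ?_⟩
    have : q ∈ D := mem_filter.2 ⟨hq, hℓ, h1, h2⟩
    simp [hD] at this
  obtain ⟨F, hF, hFmax⟩ := D.exists_max_image (fun q => q.2 - q.1) hD
  obtain ⟨hFC, hFℓ, hF1, hF2⟩ := mem_filter.1 hF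
  obtain ⟨T, hTk, hT⟩ := exists_cover_crossing (hk F hFC)
  refine ⟨F.2 + 1, insert F.2 T, by omega, by omega, (card_insert_le _ _).trans (by omega),
    fun q hq hℓ h1 h2 => ?_⟩
  rcases (show q.1 = F.2 ∨ q.1 ≤ F.1 ∨ F.1 < q.1 ∧ q.1 < F.2 by omega) with h | h | h
  · simp [h]
  · have := hFmax q (mem_filter.2 ⟨hq, hℓ, by omega, by omega⟩)
    omega
  · exact mem_insert_of_mem (hT q hq (by unfold Crosses; omega))

lemma hasBalancedIcoSep_of_forall_short (hn : 2 ≤ n) (hC : ∀ q ∈ C, q.1 < q.2)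
    (hk : ∀ p ∈ C, (C.filter (Crosses p)).card ≤ k)
    (hshort : ∀ q ∈ C, q.2 - q.1 ≤ (n - 2) / 3) :
    HasBalancedIcoSep C n (k + 1) := by
  obtain ⟨g, T, hcg, hgc, hTk, hT⟩ := exists_cut_covering_short hk ((n - 2) / 3) ((n + 2) / 3)
  refine ⟨0, g, T, by omega, by omega, by omega, hTk, fun q hq h1 _ => ?_⟩
  have := hC q hq
  simp only [mem_Ico]
  by_contra hsep
  exact h1 (hT q hq (hshort q hq) (by omega) (by omega))

lemma hasBalancedIcoSep_of_medium (hn : 2 ≤ n) (hC : ∀ q ∈ C, q.1 < q.2 ∧ q.2 < n)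
    (hk : ∀ p ∈ C, (C.filter (Crosses p)).card ≤ k) {E : ℕ × ℕ} (hE : E ∈ C)
    (hE₁ : n ≤ 3 * (E.2 - E.1) + 3 * (k + 1)) (hE₂ : 3 * (E.2 - E.1) ≤ 2 * n + 3 * (k + 1)) :
    HasBalancedIcoSep C n (2 * k + 3) := by
  obtain ⟨T, hTk, hT⟩ := exists_cover_crossing (hk E hE)
  have hsep := separates_Ico_of_cover_crossing (fun q hq => (hC q hq).1) hT
  obtain ⟨hE12, hEn⟩ := hC E hE
  obtain ⟨lo, hi, D, hhi, h1, h2, hD, hagree⟩ :=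
    exists_balanced_Ico_near hn hE12.le hEn.le hE₁ hE₂
  refine ⟨lo, hi, _, hhi, h1, h2, ?_, hsep.of_agree_off hagree⟩
  have := card_union_le (insert E.1 (insert E.2 T)) D
  have := card_insert_le E.1 (insert E.2 T)
  have := card_insert_le E.2 T
  omega

lemma hasBalancedIcoSep_of_long (hC : ∀ q ∈ C, q.1 < q.2 ∧ q.2 < n)
    (hk : ∀ p ∈ C, (C.filter (Crosses p)).card ≤ k) {E : ℕ × ℕ} (hE : E ∈ C)
    (hlong : 2 * n + 3 * (k + 1) < 3 * (E.2 - E.1))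
    (hmin : ∀ q ∈ C, (n - 2) / 3 < q.2 - q.1 → E.2 - E.1 ≤ q.2 - q.1) :
    HasBalancedIcoSep C n (2 * k + 2) := by
  obtain ⟨T, hTk, hT⟩ := exists_cover_crossing (hk E hE)
  obtain ⟨g, T', hcg, hgc, hT'k, hT'⟩ :=
    exists_cut_covering_short hk ((n - 2) / 3) (E.1 + 1 + (n + 2) / 3)
  obtain ⟨hE12, hEn⟩ := hC E hE
  have hgE : g ≤ E.2 := by omega
  refine ⟨E.1 + 1, g, insert E.1 (T ∪ T'), by omega, by omega, by omega, ?_, ?_⟩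
  · have := card_insert_le E.1 (T ∪ T')
    have := card_union_le T T'
    omega
  intro q hq h1 h2
  simp only [mem_insert, mem_union, not_or] at h1 h2
  have := (hC q hq).1
  simp only [mem_Ico]
  by_contra hsep
  by_cases hcross : Crosses E q
  · exact h1.2.1 (hT q hq hcross)
  unfold Crosses at hcross
  have hshort : q.2 - q.1 ≤ (n - 2) / 3 := by
    by_contra hq'
    have := hmin q hq (by omega)
    omega
  exact h1.2.2 (hT' q hq hshort (by omega) (by omega))

theorem hasBalancedIcoSep_of_crossings_le (hn : 2 ≤ n) (hC : ∀ q ∈ C, q.1 < q.2 ∧ q.2 < n)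
    (hk : ∀ p ∈ C, (C.filter (Crosses p)).card ≤ k) :
    HasBalancedIcoSep C n (2 * k + 3) := by
  by_cases hshort : ∀ q ∈ C, q.2 - q.1 ≤ (n - 2) / 3
  · exact (hasBalancedIcoSep_of_forall_short hn (fun q hq => (hC q hq).1) hk hshort).mono
      (by omega)
  push Not at hshort
  obtain ⟨E, hE, hEmin⟩ := (C.filter fun q => (n - 2) / 3 < q.2 - q.1).exists_min_image
    (fun q => q.2 - q.1) (hshort.imp fun q hq => mem_filter.2 hq)
  rw [mem_filter] at hE
  by_cases hmed : 3 * (E.2 - E.1) ≤ 2 * n + 3 * (k + 1)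
  · exact hasBalancedIcoSep_of_medium hn hC hk hE.1 (by omega) hmed
  · exact (hasBalancedIcoSep_of_long hC hk hE.1 (by omega)
      fun q hq hq' => hEmin q (mem_filter.2 ⟨hq, hq'⟩)).mono (by omega)

end Chord

open Chord

section Drawing

variable {V : Type*} {n : ℕ}

def chordOf (σ : V ≃ Fin n) : Sym2 V → ℕ × ℕ :=
  Sym2.lift ⟨fun u v => (min (σ u : ℕ) (σ v), max (σ u : ℕ) (σ v)),
    fun _ _ => Prod.ext (min_comm _ _) (max_comm _ _)⟩

lemma chordOf_mk (σ : V ≃ Fin n) (u v : V) :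
    chordOf σ s(u, v) = (min (σ u : ℕ) (σ v), max (σ u : ℕ) (σ v)) := rfl

lemma chordOf_lt_of_mem_edgeSet {G : SimpleGraph V} (σ : V ≃ Fin n) {e : Sym2 V}
    (he : e ∈ G.edgeSet) : (chordOf σ e).1 < (chordOf σ e).2 ∧ (chordOf σ e).2 < n := by
  induction e using Sym2.ind with
  | h u v =>
    have hne : (σ u : ℕ) ≠ σ v := fun h => G.ne_of_adj he (σ.injective (Fin.val_injective h))
    have := (σ u).isLt
    have := (σ v).isLt
    rw [chordOf_mk]
    omega

lemma sym2Cross_of_crosses (σ : V ≃ Fin n) {e f : Sym2 V}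
    (h : Crosses (chordOf σ e) (chordOf σ f)) : Sym2Cross (e.map σ) (f.map σ) := by
  induction e using Sym2.ind with
  | h u v =>
  induction f using Sym2.ind with
  | h x y =>
    refine ⟨σ u, σ v, σ x, σ y, Sym2.map_mk _ _ _, Sym2.map_mk _ _ _, ?_⟩
    simpa only [Interleave, Crosses, chordOf_mk, Fin.lt_def, Fin.coe_min, Fin.coe_max] using h

lemma card_filter_crosses_chordOf_le [Fintype V] [DecidableEq V] {G : SimpleGraph V}
    (σ : V ≃ Fin n) {e : Sym2 V} :
    ((G.edgeFinset.image (chordOf σ)).filter (Crosses (chordOf σ e))).card ≤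
      (G.edgeFinset.filter fun f => f ≠ e ∧ Sym2Cross (e.map σ) (f.map σ)).card := by
  rw [filter_image]
  refine card_image_le.trans (card_le_card (monotone_filter_right _ fun f _ h => ⟨?_, ?_⟩))
  · rintro rfl
    exact not_crosses_self _ h
  · exact sym2Cross_of_crosses σ h

lemma card_filter_val_mem [Fintype V] (σ : V ≃ Fin n) (X : Finset ℕ) :
    (univ.filter fun v => (σ v : ℕ) ∈ X).card = (X.filter (· < n)).card := by
  rw [← card_image_of_injective _ (Fin.val_injective.comp σ.injective)]
  congr 1
  ext m
  simp only [mem_image, mem_filter, mem_univ, true_and, Function.comp_apply]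
  constructor
  · rintro ⟨v, hv, rfl⟩
    exact ⟨hv, (σ v).isLt⟩
  · rintro ⟨hm, hmn⟩
    exact ⟨σ.symm ⟨m, hmn⟩, by simpa using hm, by simp⟩

end Drawing

section Separation

variable {V : Type*} [Fintype V] [DecidableEq V]

lemma hasBalancedSepAtMost_of_card_le (G : SimpleGraph V) {s : ℕ}
    (h : Fintype.card V ≤ 3 * s) : HasBalancedSepAtMost G s := by
  obtain ⟨X, -, hX⟩ := exists_subset_card_eq (s := (univ : Finset V))
    (n := (Fintype.card V + 2) / 3) (by rw [card_univ]; omega)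
  refine ⟨X, univ, by simp, fun u hu => ((mem_sdiff.1 hu).2 (mem_univ u)).elim, ?_,
    by rw [sdiff_eq_empty_iff_subset.2 (subset_univ X)]; simp, ?_⟩
  · rw [inter_univ]; omega
  · rw [← compl_eq_univ_sdiff, card_compl]; omega

lemma hasBalancedSepAtMost_of_hasBalancedIcoSep (G : SimpleGraph V)
    (σ : V ≃ Fin (Fintype.card V)) {s : ℕ}
    (h : HasBalancedIcoSep (G.edgeFinset.image (chordOf σ)) (Fintype.card V) s) :
    HasBalancedSepAtMost G s := by
  obtain ⟨lo, hi, S, hhi, h1, h2, hS, hsep⟩ := h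
  set I := Ico lo hi
  have hI : (univ.filter fun v => (σ v : ℕ) ∈ I).card = hi - lo := by
    rw [card_filter_val_mem, filter_true_of_mem fun m hm => by simp [I] at hm; omega,
      Nat.card_Ico]
  set A := univ.filter fun v => (σ v : ℕ) ∈ I ∨ (σ v : ℕ) ∈ S
  set B := univ.filter fun v => (σ v : ℕ) ∉ I ∨ (σ v : ℕ) ∈ S
  refine ⟨A, B, ?_, ?_, ?_, ?_, ?_⟩
  · ext v; simp only [A, B, mem_union, mem_filter, mem_univ, true_and]; tauto
  · intro u hu v hv huv
    simp only [A, B, mem_sdiff, mem_filter, mem_univ, true_and] at hu hv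
    have := hsep (chordOf σ s(u, v)) (mem_image_of_mem _ (G.mem_edgeFinset.2 huv))
    rcases le_total (σ u : ℕ) (σ v) with h | h <;>
      simp only [chordOf_mk, min_eq_left, min_eq_right, max_eq_left, max_eq_right, h] at this <;>
      tauto
  · calc _ = (univ.filter fun v => (σ v : ℕ) ∈ S).card := by
          congr 1; ext v; simp only [A, B, mem_inter, mem_filter, mem_univ, true_and]; tauto
      _ ≤ s := (card_filter_val_mem σ S).trans_le ((card_filter_le _ _).trans hS)
  · have : A \ B ⊆ univ.filter fun v => (σ v : ℕ) ∈ I := fun v hv => by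
      simp only [A, B, mem_sdiff, mem_filter, mem_univ, true_and] at hv ⊢; tauto
    have := card_le_card this
    omega
  · have : B \ A ⊆ (univ.filter fun v => (σ v : ℕ) ∈ I)ᶜ := fun v hv => by
      simp only [A, B, mem_sdiff, mem_filter, mem_univ, true_and, mem_compl] at hv ⊢; tauto
    have := card_le_card this
    rw [card_compl, hI] at this
    omega

end Separation

/-- Every graph admitting an outer `k`-planar drawing has a balanced separation
of size at most `2k + 3`. -/
theorem stmt8 (k : ℕ) {V : Type*} [Fintype V] [DecidableEq V]
    (G : SimpleGraph V) (h : IsOuterKPlanar k G) :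
    HasBalancedSepAtMost G (2 * k + 3) := by
  obtain ⟨σ, hσ⟩ := h
  by_cases hn : Fintype.card V ≤ 3 * (2 * k + 3)
  · exact hasBalancedSepAtMost_of_card_le G hn
  refine hasBalancedSepAtMost_of_hasBalancedIcoSep G σ
    (hasBalancedIcoSep_of_crossings_le (by omega) ?_ ?_)
  · simp only [mem_image, SimpleGraph.mem_edgeFinset]
    rintro _ ⟨e, he, rfl⟩
    exact chordOf_lt_of_mem_edgeSet σ he
  · simp only [mem_image]
    rintro _ ⟨e, he, rfl⟩
    exact card_filter_crosses_chordOf_le σ |>.trans (hσ e he)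
end

section
/- The separation number of any outer k-planar graph is at most 2k+3: every subgraph of an outer k-planar graph has a balanced separation of size at most 2k+3. -/
open Finset

open scoped Classical

/-!
Place the vertices of the subgraph at positions `0, 1, 2, …` on a circle, in the order of the
drawing. A set `S` containing both endpoints of a chord and an endpoint of every edge crossing it
separates the two sides of the chord, so an edge of the drawing can be cut at the cost of at most
`k + 2` vertices. If some edge leaves at most `2n/3` vertices on either side, cut along it.
Otherwise take the chord `(u, v)` from the leftmost vertex that splits the others roughly `2 : 1`;
every edge crossing it is long (more than `2n/3` vertices inside) or short (more than `2n/3`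
outside). Cutting along the long crossing edge starting closest to `v`, the short one starting
closest to `u`, and one more chord whose crossing edges are forced through these two by their
extremality, leaves at most four regions of at most `2n/3` vertices each, behind a separator of at
most `2k + 3` vertices; the regions are then grouped into two sides.
-/

namespace OuterKPlanar

theorem card_filter_le_card_filter_of_imp {α : Type*} {s : Finset α} {p q : α → Prop}
    [DecidablePred p] [DecidablePred q] (h : ∀ w ∈ s, p w → q w) :
    #{w ∈ s | p w} ≤ #{w ∈ s | q w} :=
  card_le_card fun w hw => by
    rw [mem_filter] at hw ⊢
    exact ⟨hw.1, h w hw.1 hw.2⟩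

theorem mul_card_filter_le_of_imp {α : Type*} {s : Finset α} {p q : α → Prop}
    [DecidablePred p] [DecidablePred q] {a m : ℕ} (h : ∀ w ∈ s, p w → q w)
    (hq : a * #{w ∈ s | q w} ≤ m) : a * #{w ∈ s | p w} ≤ m :=
  (Nat.mul_le_mul_left a (card_filter_le_card_filter_of_imp h)).trans hq

theorem exists_mem_card_filter_lt_eq {α : Type*} [LinearOrder α] (s : Finset α) {r : ℕ}
    (hr : r < #s) : ∃ v ∈ s, #{w ∈ s | w < v} = r := by
  induction s using induction_on_max generalizing r with
  | empty => simp at hr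
  | insert a s hlt ih =>
    rw [card_insert_of_notMem fun ha => lt_irrefl a (hlt a ha)] at hr
    rcases Nat.lt_succ_iff_lt_or_eq.1 hr with hr | rfl
    · obtain ⟨v, hv, hcard⟩ := ih hr
      refine ⟨v, mem_insert_of_mem hv, ?_⟩
      rw [filter_insert, if_neg (not_lt.2 (hlt v hv).le), hcard]
    · refine ⟨a, mem_insert_self a s, ?_⟩
      rw [filter_insert, if_neg (lt_irrefl a), filter_true_of_mem hlt]

theorem exists_balanced_split {α ι : Type*} [Fintype ι] [DecidableEq ι] (s : Finset α)
    (col : α → ι) {N : ℕ} (hs : #s ≤ N) (hclass : ∀ i, 3 * #{x ∈ s | col x = i} ≤ 2 * N) :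
    ∃ X : Finset ι, 3 * #{x ∈ s | col x ∈ X} ≤ 2 * N ∧ 3 * #{x ∈ s | col x ∉ X} ≤ 2 * N := by
  have hsum : ∀ X : Finset ι, #{x ∈ s | col x ∈ X} + #{x ∈ s | col x ∉ X} = #s :=
    fun X => card_filter_add_card_filter_not _
  by_cases hbig : ∃ i, N < 3 * #{x ∈ s | col x = i}
  · obtain ⟨i, hi⟩ := hbig
    have := hsum {i}
    simp only [mem_singleton] at this
    refine ⟨{i}, ?_, ?_⟩ <;> simp only [mem_singleton]
    · exact hclass i
    · omega
  push Not at hbig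
  -- Now every class has at most `N/3` elements, so a heaviest union of classes with at most
  -- `2N/3` elements leaves at most `2N/3` outside.
  obtain ⟨X, hX, hmax⟩ := exists_max_image {X : Finset ι | 3 * #{x ∈ s | col x ∈ X} ≤ 2 * N}
    (fun X => #{x ∈ s | col x ∈ X}) ⟨∅, by simp⟩
  rw [mem_filter] at hX
  refine ⟨X, hX.2, not_lt.1 fun hlarge => ?_⟩
  obtain ⟨x, hx⟩ : {x ∈ s | col x ∉ X}.Nonempty := by
    rw [← card_pos]; omega
  rw [mem_filter] at hx
  have hins : #{y ∈ s | col y ∈ insert (col x) X} =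
      #{y ∈ s | col y = col x} + #{y ∈ s | col y ∈ X} := by
    rw [← card_union_of_disjoint]
    · congr 1; ext; simp only [mem_filter, mem_insert, mem_union]; tauto
    · exact disjoint_filter.2 fun y _ hy hyX => hx.2 (hy ▸ hyX)
  have hpos : 0 < #{y ∈ s | col y = col x} := card_pos.2 ⟨x, mem_filter.2 ⟨hx.1, rfl⟩⟩
  have := hmax (insert (col x) X) (mem_filter.2 ⟨mem_univ _, by
    have := hbig (col x); have := hsum X; omega⟩)
  omega

section Separation

variable {α : Type*} [DecidableEq α]

def HasBalancedSepIn (adj : α → α → Prop) (t : Finset α) (s : ℕ) : Prop :=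
  ∃ A B : Finset α, A ∪ B = t ∧ (∀ x ∈ A \ B, ∀ y ∈ B \ A, ¬ adj x y) ∧
    #(A ∩ B) ≤ s ∧ 3 * #(A \ B) ≤ 2 * #t ∧ 3 * #(B \ A) ≤ 2 * #t

theorem hasBalancedSepIn_of_card_le {adj : α → α → Prop} {t : Finset α} {s : ℕ}
    (ht : #t ≤ s) : HasBalancedSepIn adj t s :=
  ⟨t, t, union_self t, by simp, by simpa using ht, by simp, by simp⟩

theorem HasBalancedSepIn.comap {β : Type*} [DecidableEq β] {adj : α → α → Prop}
    {adj' : β → β → Prop} {t : Finset α} {s : ℕ} {f : α → β} (hf : Set.InjOn f t)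
    (hadj : ∀ x ∈ t, ∀ y ∈ t, adj x y → adj' (f x) (f y))
    (h : HasBalancedSepIn adj' (t.image f) s) : HasBalancedSepIn adj t s := by
  obtain ⟨A, B, hAB, hsep, hAiB, hAdB, hBdA⟩ := h
  have hcard : ∀ X : Finset β, #{x ∈ t | f x ∈ X} ≤ #X := fun X =>
    card_le_card_of_injOn f (fun x hx => (mem_filter.1 hx).2)
      (hf.mono fun x hx => (mem_filter.1 hx).1)
  have hpre : ∀ X Y : Finset β, {x ∈ t | f x ∈ X} \ {x ∈ t | f x ∈ Y} = {x ∈ t | f x ∈ X \ Y} :=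
    fun X Y => by ext; simp only [mem_sdiff, mem_filter]; tauto
  rw [card_image_of_injOn hf] at hAdB hBdA
  refine ⟨{x ∈ t | f x ∈ A}, {x ∈ t | f x ∈ B}, ?_, ?_, ?_, ?_, ?_⟩
  · ext x
    simp only [mem_union, mem_filter]
    constructor
    · rintro (⟨hx, -⟩ | ⟨hx, -⟩) <;> exact hx
    · intro hx
      have : f x ∈ A ∪ B := hAB ▸ mem_image_of_mem f hx
      exact (mem_union.1 this).imp (⟨hx, ·⟩) (⟨hx, ·⟩)
  · rw [hpre, hpre]
    intro x hx y hy hxy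
    rw [mem_filter] at hx hy
    exact hsep _ hx.2 _ hy.2 (hadj x hx.1 y hy.1 hxy)
  · calc #({x ∈ t | f x ∈ A} ∩ {x ∈ t | f x ∈ B}) = #{x ∈ t | f x ∈ A ∩ B} := by
          congr 1; ext; simp only [mem_inter, mem_filter]; tauto
      _ ≤ s := (hcard _).trans hAiB
  · rw [hpre]; exact (Nat.mul_le_mul_left 3 (hcard _)).trans hAdB
  · rw [hpre]; exact (Nat.mul_le_mul_left 3 (hcard _)).trans hBdA

theorem hasBalancedSepIn_of_coloring {ι : Type*} [Fintype ι] [DecidableEq ι]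
    {adj : α → α → Prop} {t S : Finset α} {s : ℕ} (hSt : S ⊆ t) (hS : #S ≤ s) (col : α → ι)
    (hcol : ∀ x ∈ t \ S, ∀ y ∈ t \ S, adj x y → col x = col y)
    (hclass : ∀ i, 3 * #{x ∈ t \ S | col x = i} ≤ 2 * #t) : HasBalancedSepIn adj t s := by
  obtain ⟨X, hX, hXc⟩ := exists_balanced_split (t \ S) col (card_le_card sdiff_subset) hclass
  have hA : (S ∪ {x ∈ t \ S | col x ∈ X}) \ (S ∪ {x ∈ t \ S | col x ∉ X}) =
      {x ∈ t \ S | col x ∈ X} := by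
    ext; simp only [mem_sdiff, mem_union, mem_filter]; tauto
  have hB : (S ∪ {x ∈ t \ S | col x ∉ X}) \ (S ∪ {x ∈ t \ S | col x ∈ X}) =
      {x ∈ t \ S | col x ∉ X} := by
    ext; simp only [mem_sdiff, mem_union, mem_filter]; tauto
  refine ⟨S ∪ {x ∈ t \ S | col x ∈ X}, S ∪ {x ∈ t \ S | col x ∉ X}, ?_, ?_, ?_, ?_, ?_⟩
  · rw [← union_union_distrib_left, filter_union_filter_not_eq, union_sdiff_of_subset hSt]
  · rw [hA, hB]
    intro x hx y hy hxy
    rw [mem_filter] at hx hy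
    exact hy.2 (hcol x hx.1 y hy.1 hxy ▸ hx.2)
  · rwa [← union_inter_distrib_left, disjoint_iff_inter_eq_empty.1
      (disjoint_filter_filter_not _ _ _), union_empty]
  · rwa [hA]
  · rwa [hB]

end Separation

section Chords

/-- Points in convex position are numbered in cyclic order; a chord is the pair of its
endpoints listed in increasing order. -/
def Crosses (e f : ℕ × ℕ) : Prop :=
  (e.1 < f.1 ∧ f.1 < e.2 ∧ e.2 < f.2) ∨ (f.1 < e.1 ∧ e.1 < f.2 ∧ f.2 < e.2)

def Inside (c : ℕ × ℕ) (w : ℕ) : Prop := c.1 < w ∧ w < c.2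

def Outside (c : ℕ × ℕ) (w : ℕ) : Prop := w < c.1 ∨ c.2 < w

def Joined (E : Finset (ℕ × ℕ)) (x y : ℕ) : Prop := (x, y) ∈ E ∨ (y, x) ∈ E

def CutsChord (E : Finset (ℕ × ℕ)) (S : Finset ℕ) (c : ℕ × ℕ) : Prop :=
  c.1 ∈ S ∧ c.2 ∈ S ∧ ∀ f ∈ E, Crosses c f → f.1 ∈ S ∨ f.2 ∈ S

variable {t S : Finset ℕ} {E : Finset (ℕ × ℕ)} {c : ℕ × ℕ}

theorem card_inside_add_card_outside (hc1 : c.1 ∈ t) (hc2 : c.2 ∈ t) (hc : c.1 < c.2) :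
    #{w ∈ t | Inside c w} + #{w ∈ t | Outside c w} + 2 = #t := by
  have hrest : {w ∈ t | ¬ Inside c w} = insert c.1 (insert c.2 {w ∈ t | Outside c w}) := by
    ext w
    simp only [mem_filter, mem_insert]
    unfold Inside Outside
    constructor
    · rintro ⟨hw, h⟩
      by_cases h1 : w = c.1
      · exact Or.inl h1
      by_cases h2 : w = c.2
      · exact Or.inr (Or.inl h2)
      exact Or.inr (Or.inr ⟨hw, by omega⟩)
    · rintro (rfl | rfl | ⟨hw, h⟩)
      · exact ⟨hc1, by omega⟩
      · exact ⟨hc2, by omega⟩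
      · exact ⟨hw, by omega⟩
  have h1 : c.1 ∉ insert c.2 {w ∈ t | Outside c w} := by
    simp only [mem_insert, mem_filter]; unfold Outside; omega
  have h2 : c.2 ∉ {w ∈ t | Outside c w} := by
    simp only [mem_filter]; unfold Outside; omega
  rw [← card_filter_add_card_filter_not (s := t) (Inside c), hrest,
    card_insert_of_notMem h1, card_insert_of_notMem h2]
  ring

theorem CutsChord.outside_of_not_inside (hc : CutsChord E S c) {w : ℕ} (hw : w ∉ S)
    (h : ¬ Inside c w) : Outside c w := by
  have h1 : w ≠ c.1 := fun h => hw (h ▸ hc.1)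
  have h2 : w ≠ c.2 := fun h => hw (h ▸ hc.2.1)
  unfold Inside at h
  unfold Outside
  omega

theorem CutsChord.inside_iff (hc : CutsChord E S c) {f : ℕ × ℕ} (hf : f ∈ E) (hlt : f.1 < f.2)
    (h1 : f.1 ∉ S) (h2 : f.2 ∉ S) : Inside c f.1 ↔ Inside c f.2 := by
  have hcross : ¬ Crosses c f := fun h => (hc.2.2 f hf h).elim h1 h2
  have : f.1 ≠ c.1 := fun h => h1 (h ▸ hc.1)
  have : f.1 ≠ c.2 := fun h => h1 (h ▸ hc.2.1)
  have : f.2 ≠ c.1 := fun h => h2 (h ▸ hc.1)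
  have : f.2 ≠ c.2 := fun h => h2 (h ▸ hc.2.1)
  unfold Crosses at hcross
  unfold Inside
  omega

/-- Colour the points off `S` by the sides of `c` and `d` they lie on: by
`CutsChord.inside_iff`, no edge avoiding `S` joins two colours. -/
theorem hasBalancedSepIn_of_cutsChord {s : ℕ} {d : ℕ × ℕ} (hE : ∀ f ∈ E, f.1 < f.2)
    (hSt : S ⊆ t) (hS : #S ≤ s) (hc : CutsChord E S c) (hd : CutsChord E S d)
    (h11 : 3 * #{w ∈ t | Inside c w ∧ Inside d w} ≤ 2 * #t)
    (h10 : 3 * #{w ∈ t | Inside c w ∧ Outside d w} ≤ 2 * #t)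
    (h01 : 3 * #{w ∈ t | Outside c w ∧ Inside d w} ≤ 2 * #t)
    (h00 : 3 * #{w ∈ t | Outside c w ∧ Outside d w} ≤ 2 * #t) :
    HasBalancedSepIn (Joined E) t s := by
  refine hasBalancedSepIn_of_coloring hSt hS (fun w => (decide (Inside c w), decide (Inside d w)))
    ?_ ?_
  · have hsame : ∀ f ∈ E, f.1 ∉ S → f.2 ∉ S →
        (decide (Inside c f.1), decide (Inside d f.1)) =
          (decide (Inside c f.2), decide (Inside d f.2)) := fun f hf h1 h2 => by
      rw [decide_eq_decide.2 (hc.inside_iff hf (hE f hf) h1 h2),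
        decide_eq_decide.2 (hd.inside_iff hf (hE f hf) h1 h2)]
    rintro x hx y hy (hxy | hxy)
    · exact hsame _ hxy (mem_sdiff.1 hx).2 (mem_sdiff.1 hy).2
    · exact (hsame _ hxy (mem_sdiff.1 hy).2 (mem_sdiff.1 hx).2).symm
  · have hside : ∀ {e : ℕ × ℕ}, CutsChord E S e → ∀ w ∈ t \ S, ∀ b : Bool,
        decide (Inside e w) = b → if b then Inside e w else Outside e w := by
      rintro e he w hw (_ | _) h
      · exact he.outside_of_not_inside (mem_sdiff.1 hw).2 (by simpa using h)
      · simpa using h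
    rintro ⟨a, b⟩
    have hclass : {w ∈ t \ S | (decide (Inside c w), decide (Inside d w)) = (a, b)} ⊆
        {w ∈ t | (if a then Inside c w else Outside c w) ∧
          (if b then Inside d w else Outside d w)} := by
      intro w hw
      rw [mem_filter, Prod.mk.injEq] at hw
      exact mem_filter.2 ⟨(mem_sdiff.1 hw.1).1, hside hc w hw.1 a hw.2.1,
        hside hd w hw.1 b hw.2.2⟩
    refine (Nat.mul_le_mul_left 3 (card_le_card hclass)).trans ?_
    cases a <;> cases b <;> simpa

end Chords

/-- The bound `(n + 3) / 3` outside the chord keeps the middle region in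
`Drawing.hasBalancedSepIn_of_long_short_of_fst_le` small. -/
structure IsBaseChord (t : Finset ℕ) (u v : ℕ) : Prop where
  u_mem : u ∈ t
  v_mem : v ∈ t
  u_le : ∀ w ∈ t, u ≤ w
  u_lt_v : u < v
  inside_le : 3 * #{w ∈ t | Inside (u, v) w} ≤ 2 * #t
  outside_le : 3 * #{w ∈ t | Outside (u, v) w} ≤ #t + 3
  three_le_card : 3 ≤ #t

theorem exists_isBaseChord {t : Finset ℕ} (ht : 3 ≤ #t) : ∃ u v, IsBaseChord t u v := by
  have hne : t.Nonempty := card_pos.1 (by omega)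
  have hu := min'_mem t hne
  obtain ⟨v, hv, hcard⟩ := exists_mem_card_filter_lt_eq (t.erase (t.min' hne))
    (r := (2 * #t - 7) / 3) (by rw [card_erase_of_mem hu]; omega)
  have hv' := mem_of_mem_erase hv
  have huv : t.min' hne < v := lt_of_le_of_ne (min'_le t v hv') (ne_of_mem_erase hv).symm
  have hinside : #{w ∈ t | Inside (t.min' hne, v) w} = (2 * #t - 7) / 3 := by
    rw [← hcard]
    congr 1
    ext w
    simp only [mem_filter, mem_erase]
    unfold Inside
    constructor
    · rintro ⟨hw, h1, h2⟩
      exact ⟨⟨h1.ne', hw⟩, h2⟩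
    · rintro ⟨⟨h1, hw⟩, h2⟩
      exact ⟨hw, lt_of_le_of_ne (min'_le t w hw) (Ne.symm h1), h2⟩
  have hsplit := card_inside_add_card_outside (c := (t.min' hne, v)) hu hv' huv
  exact ⟨t.min' hne, v, hu, hv', fun w hw => min'_le t w hw, huv, by omega, by omega, by omega⟩

theorem IsBaseChord.straddle {t : Finset ℕ} {u v : ℕ} (hb : IsBaseChord t u v) {f : ℕ × ℕ}
    (hf : f.1 ∈ t) (h : Crosses (u, v) f) : u < f.1 ∧ f.1 < v ∧ v < f.2 := by
  have := hb.u_le _ hf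
  unfold Crosses at h
  omega

theorem IsBaseChord.outside_le_two_mul {t : Finset ℕ} {u v : ℕ} (hb : IsBaseChord t u v) :
    3 * #{w ∈ t | Outside (u, v) w} ≤ 2 * #t := by
  have := hb.outside_le
  have := hb.three_le_card
  omega

/-- As `Crosses e e` never holds, `card_crosses_le` counts the other edges crossing `e`. -/
structure Drawing (k : ℕ) where
  pts : Finset ℕ
  edges : Finset (ℕ × ℕ)
  mem_pts : ∀ f ∈ edges, f.1 ∈ pts ∧ f.2 ∈ pts
  lt : ∀ f ∈ edges, f.1 < f.2
  card_crosses_le : ∀ e ∈ edges, #{f ∈ edges | Crosses e f} ≤ k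

namespace Drawing

variable {k : ℕ} (D : Drawing k)

def IsBalanced (c : ℕ × ℕ) : Prop :=
  3 * #{w ∈ D.pts | Inside c w} ≤ 2 * #D.pts ∧ 3 * #{w ∈ D.pts | Outside c w} ≤ 2 * #D.pts

noncomputable def crossFst (c : ℕ × ℕ) : Finset ℕ := {f ∈ D.edges | Crosses c f}.image Prod.fst

noncomputable def sep (P : Finset ℕ) (c d : ℕ × ℕ) : Finset ℕ := P ∪ D.crossFst c ∪ D.crossFst d

variable {D} {P : Finset ℕ} {c d f : ℕ × ℕ}

theorem card_inside_add_card_outside_of_mem (hf : f ∈ D.edges) :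
    #{w ∈ D.pts | Inside f w} + #{w ∈ D.pts | Outside f w} + 2 = #D.pts :=
  OuterKPlanar.card_inside_add_card_outside (D.mem_pts f hf).1 (D.mem_pts f hf).2 (D.lt f hf)

theorem sep_subset (hP : P ⊆ D.pts) : D.sep P c d ⊆ D.pts := by
  have hcross : ∀ e, D.crossFst e ⊆ D.pts := fun e x hx => by
    obtain ⟨f, hf, rfl⟩ := mem_image.1 hx
    exact (D.mem_pts f (mem_filter.1 hf).1).1
  exact union_subset (union_subset hP (hcross c)) (hcross d)

theorem card_sep_le (hc : c ∈ D.edges) (hd : d ∈ D.edges) : #(D.sep P c d) ≤ #P + 2 * k := by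
  have hc' : #(D.crossFst c) ≤ k := card_image_le.trans (D.card_crosses_le c hc)
  have hd' : #(D.crossFst d) ≤ k := card_image_le.trans (D.card_crosses_le d hd)
  have := card_union_le (P ∪ D.crossFst c) (D.crossFst d)
  have := card_union_le P (D.crossFst c)
  rw [sep]
  omega

theorem mem_sep_of_mem {x : ℕ} (hx : x ∈ P) : x ∈ D.sep P c d :=
  mem_union_left _ (mem_union_left _ hx)

theorem fst_mem_sep_left (hf : f ∈ D.edges) (h : Crosses c f) : f.1 ∈ D.sep P c d :=
  mem_union_left _ (mem_union_right _ (mem_image_of_mem _ (mem_filter.2 ⟨hf, h⟩)))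

theorem fst_mem_sep_right (hf : f ∈ D.edges) (h : Crosses d f) : f.1 ∈ D.sep P c d :=
  mem_union_right _ (mem_image_of_mem _ (mem_filter.2 ⟨hf, h⟩))

theorem cutsChord_sep_left (h1 : c.1 ∈ D.sep P c d) (h2 : c.2 ∈ D.sep P c d) :
    CutsChord D.edges (D.sep P c d) c :=
  ⟨h1, h2, fun _ hf h => Or.inl (fst_mem_sep_left hf h)⟩

theorem cutsChord_sep_right (h1 : d.1 ∈ D.sep P c d) (h2 : d.2 ∈ D.sep P c d) :
    CutsChord D.edges (D.sep P c d) d :=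
  ⟨h1, h2, fun _ hf h => Or.inl (fst_mem_sep_right hf h)⟩

theorem hasBalancedSepIn_of_isBalanced (he : c ∈ D.edges) (hbal : D.IsBalanced c) :
    HasBalancedSepIn (Joined D.edges) D.pts (2 * k + 3) := by
  have hP : ({c.1, c.2} : Finset ℕ) ⊆ D.pts := by
    simp [insert_subset_iff, D.mem_pts c he]
  have hcut : CutsChord D.edges (D.sep {c.1, c.2} c c) c :=
    cutsChord_sep_left (mem_sep_of_mem (by simp)) (mem_sep_of_mem (by simp))
  refine hasBalancedSepIn_of_cutsChord D.lt (sep_subset hP)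
    ((card_sep_le he he).trans (by have := card_le_two (a := c.1) (b := c.2); omega)) hcut hcut
    ?_ ?_ ?_ ?_
  · exact mul_card_filter_le_of_imp (fun w _ hw => hw.1) hbal.1
  · exact mul_card_filter_le_of_imp (fun w _ hw => hw.1) hbal.1
  · exact mul_card_filter_le_of_imp (fun w _ hw => hw.1) hbal.2
  · exact mul_card_filter_le_of_imp (fun w _ hw => hw.1) hbal.2

variable {u v : ℕ}

theorem hasBalancedSepIn_of_forall_not_crosses (hb : IsBaseChord D.pts u v)
    (hF : ∀ f ∈ D.edges, ¬ Crosses (u, v) f) :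
    HasBalancedSepIn (Joined D.edges) D.pts (2 * k + 3) := by
  have hcut : CutsChord D.edges {u, v} (u, v) :=
    ⟨by simp, by simp, fun f hf h => (hF f hf h).elim⟩
  refine hasBalancedSepIn_of_cutsChord D.lt (by simp [insert_subset_iff, hb.u_mem, hb.v_mem])
    (card_le_two.trans (by omega)) hcut hcut ?_ ?_ ?_ ?_
  · exact mul_card_filter_le_of_imp (fun w _ hw => hw.1) hb.inside_le
  · exact mul_card_filter_le_of_imp (fun w _ hw => hw.1) hb.inside_le
  · exact mul_card_filter_le_of_imp (fun w _ hw => hw.1) hb.outside_le_two_mul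
  · exact mul_card_filter_le_of_imp (fun w _ hw => hw.1) hb.outside_le_two_mul

/-- Cut along `g` and the chord `(g.1, v)`. -/
theorem hasBalancedSepIn_of_max_crosses (hb : IsBaseChord D.pts u v) {g : ℕ × ℕ}
    (hg : g ∈ D.edges) (hgc : Crosses (u, v) g)
    (hglong : 2 * #D.pts < 3 * #{w ∈ D.pts | Inside g w})
    (hmax : ∀ f ∈ D.edges, Crosses (u, v) f → f.1 ≤ g.1) :
    HasBalancedSepIn (Joined D.edges) D.pts (2 * k + 3) := by
  obtain ⟨hg1, hg2⟩ := D.mem_pts g hg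
  have hgs := hb.straddle hg1 hgc
  have hP : ({g.1, g.2, v} : Finset ℕ) ⊆ D.pts := by
    simp [insert_subset_iff, hg1, hg2, hb.v_mem]
  have hcg : CutsChord D.edges (D.sep {g.1, g.2, v} g g) g :=
    cutsChord_sep_left (mem_sep_of_mem (by simp)) (mem_sep_of_mem (by simp))
  have hcv : CutsChord D.edges (D.sep {g.1, g.2, v} g g) (g.1, v) := by
    refine ⟨mem_sep_of_mem (by simp), mem_sep_of_mem (by simp), fun f hf hcross => ?_⟩
    have hflt := D.lt f hf
    simp only [Crosses] at hcross
    rcases hcross with h | h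
    · have := hmax f hf (by simp only [Crosses]; omega)
      omega
    · exact Or.inl (fst_mem_sep_left hf (by simp only [Crosses]; omega))
  have hsplit := card_inside_add_card_outside_of_mem hg
  refine hasBalancedSepIn_of_cutsChord D.lt (sep_subset hP)
    ((card_sep_le hg hg).trans (by have := card_le_three (a := g.1) (b := g.2) (c := v); omega))
    hcg hcv ?_ ?_ ?_ ?_
  · exact mul_card_filter_le_of_imp
      (fun w _ hw => by simp only [Inside] at hw ⊢; omega) hb.inside_le
  · exact mul_card_filter_le_of_imp
      (fun w _ hw => by simp only [Inside, Outside] at hw ⊢; omega) hb.outside_le_two_mul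
  · exact mul_card_filter_le_of_imp
      (fun w _ hw => by simp only [Inside, Outside] at hw ⊢; omega) hb.inside_le
  · exact mul_card_filter_le_of_imp (fun w _ hw => hw.1) (by omega)

/-- Cut along `h` and the chord `(u, h.2)`. -/
theorem hasBalancedSepIn_of_min_crosses (hb : IsBaseChord D.pts u v) {h : ℕ × ℕ}
    (hh : h ∈ D.edges) (hhc : Crosses (u, v) h)
    (hhshort : 3 * #{w ∈ D.pts | Inside h w} ≤ 2 * #D.pts)
    (hmin : ∀ f ∈ D.edges, Crosses (u, v) f → h.1 ≤ f.1) :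
    HasBalancedSepIn (Joined D.edges) D.pts (2 * k + 3) := by
  obtain ⟨hh1, hh2⟩ := D.mem_pts h hh
  have hhs := hb.straddle hh1 hhc
  have hP : ({u, h.1, h.2} : Finset ℕ) ⊆ D.pts := by
    simp [insert_subset_iff, hh1, hh2, hb.u_mem]
  have hch : CutsChord D.edges (D.sep {u, h.1, h.2} h h) h :=
    cutsChord_sep_left (mem_sep_of_mem (by simp)) (mem_sep_of_mem (by simp))
  have hcu : CutsChord D.edges (D.sep {u, h.1, h.2} h h) (u, h.2) := by
    refine ⟨mem_sep_of_mem (by simp), mem_sep_of_mem (by simp), fun f hf hcross => ?_⟩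
    have hflt := D.lt f hf
    have hfu := hb.u_le f.1 (D.mem_pts f hf).1
    simp only [Crosses] at hcross
    rcases lt_trichotomy f.1 h.1 with hlt | heq | hgt
    · have := hmin f hf (by simp only [Crosses]; omega)
      omega
    · exact Or.inl (mem_sep_of_mem (by simp [heq]))
    · exact Or.inl (fst_mem_sep_left hf (by simp only [Crosses]; omega))
  refine hasBalancedSepIn_of_cutsChord D.lt (sep_subset hP)
    ((card_sep_le hh hh).trans (by have := card_le_three (a := u) (b := h.1) (c := h.2); omega))
    hch hcu ?_ ?_ ?_ ?_
  · exact mul_card_filter_le_of_imp (fun w _ hw => hw.1) hhshort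
  · exact mul_card_filter_le_of_imp (fun w _ hw => hw.1) hhshort
  · exact mul_card_filter_le_of_imp
      (fun w _ hw => by simp only [Inside, Outside] at hw ⊢; omega) hb.inside_le
  · exact mul_card_filter_le_of_imp
      (fun w _ hw => by simp only [Outside] at hw ⊢; omega) hb.outside_le_two_mul

theorem hasBalancedSepIn_of_crosses {α β : ℕ × ℕ} (hα : α ∈ D.edges) (hβ : β ∈ D.edges)
    (h1 : α.1 < β.1) (h2 : β.1 < α.2) (h3 : α.2 < β.2)
    (hA : 3 * #{w ∈ D.pts | Inside (α.1, β.1) w} ≤ 2 * #D.pts)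
    (hB : 3 * #{w ∈ D.pts | Inside (β.1, α.2) w} ≤ 2 * #D.pts)
    (hC : 3 * #{w ∈ D.pts | Inside (α.2, β.2) w} ≤ 2 * #D.pts)
    (hO : 3 * #{w ∈ D.pts | Outside (α.1, β.2) w} ≤ 2 * #D.pts) :
    HasBalancedSepIn (Joined D.edges) D.pts (2 * k + 3) := by
  have hP : ({α.2, β.2} : Finset ℕ) ⊆ D.pts := by
    simp [insert_subset_iff, (D.mem_pts α hα).2, (D.mem_pts β hβ).2]
  -- the crossing of `α` and `β` puts `α.1` and `β.1` into the separator for free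
  have hα1 : α.1 ∈ D.sep {α.2, β.2} α β := fst_mem_sep_right hα (Or.inr ⟨h1, h2, h3⟩)
  have hβ1 : β.1 ∈ D.sep {α.2, β.2} α β := fst_mem_sep_left hβ (Or.inl ⟨h1, h2, h3⟩)
  refine hasBalancedSepIn_of_cutsChord D.lt (sep_subset hP)
    ((card_sep_le hα hβ).trans (by have := card_le_two (a := α.2) (b := β.2); omega))
    (cutsChord_sep_left hα1 (mem_sep_of_mem (by simp)))
    (cutsChord_sep_right hβ1 (mem_sep_of_mem (by simp))) ?_ ?_ ?_ ?_
  · exact mul_card_filter_le_of_imp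
      (fun w _ hw => by simp only [Inside] at hw ⊢; omega) hB
  · exact mul_card_filter_le_of_imp
      (fun w _ hw => by simp only [Inside, Outside] at hw ⊢; omega) hA
  · exact mul_card_filter_le_of_imp
      (fun w _ hw => by simp only [Inside, Outside] at hw ⊢; omega) hC
  · exact mul_card_filter_le_of_imp
      (fun w _ hw => by simp only [Outside] at hw ⊢; omega) hO

/-- An edge crossing `(h.1, g.2)` but neither `g` nor `h` would cross the base chord strictly
between `g.1` and `h.1`, against the choice of `g` and `h`. -/
theorem cutsChord_of_long_short (hb : IsBaseChord D.pts u v) {g h : ℕ × ℕ}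
    (hg : g ∈ D.edges) (hh : h ∈ D.edges) (hgc : Crosses (u, v) g) (hhc : Crosses (u, v) h)
    (hgmax : ∀ f ∈ D.edges, Crosses (u, v) f →
      2 * #D.pts < 3 * #{w ∈ D.pts | Inside f w} → f.1 ≤ g.1)
    (hhmin : ∀ f ∈ D.edges, Crosses (u, v) f →
      3 * #{w ∈ D.pts | Inside f w} ≤ 2 * #D.pts → h.1 ≤ f.1)
    (hfst : g.1 ≤ h.1) :
    CutsChord D.edges (D.sep {g.1, g.2, h.1} g h) (h.1, g.2) := by
  have hgs := hb.straddle (D.mem_pts g hg).1 hgc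
  have hhs := hb.straddle (D.mem_pts h hh).1 hhc
  refine ⟨mem_sep_of_mem (by simp), mem_sep_of_mem (by simp), fun f hf hcross => ?_⟩
  have hflt := D.lt f hf
  simp only [Crosses] at hcross
  rcases hcross with hc | hc
  · exact Or.inl (fst_mem_sep_left hf (by simp only [Crosses]; omega))
  rcases lt_trichotomy f.1 g.1 with hlt | heq | hgt
  · exact Or.inl (fst_mem_sep_left hf (by simp only [Crosses]; omega))
  · exact Or.inl (mem_sep_of_mem (by simp [heq]))
  by_cases hfh : f.2 < h.2
  · exact Or.inl (fst_mem_sep_right hf (by simp only [Crosses]; omega))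
  have hfc : Crosses (u, v) f := by simp only [Crosses]; omega
  by_cases hlong : 2 * #D.pts < 3 * #{w ∈ D.pts | Inside f w}
  · have := hgmax f hf hfc hlong
    omega
  · have := hhmin f hf hfc (not_lt.1 hlong)
    omega

/-- Cut along `g` and the chord `(h.1, g.2)`. -/
theorem hasBalancedSepIn_of_long_short_of_fst_le (hb : IsBaseChord D.pts u v) {g h : ℕ × ℕ}
    (hg : g ∈ D.edges) (hh : h ∈ D.edges) (hgc : Crosses (u, v) g) (hhc : Crosses (u, v) h)
    (hgout : 3 * #{w ∈ D.pts | Outside g w} ≤ 2 * #D.pts)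
    (hhin : 3 * #{w ∈ D.pts | Inside h w} + 7 ≤ #D.pts)
    (hgmax : ∀ f ∈ D.edges, Crosses (u, v) f →
      2 * #D.pts < 3 * #{w ∈ D.pts | Inside f w} → f.1 ≤ g.1)
    (hhmin : ∀ f ∈ D.edges, Crosses (u, v) f →
      3 * #{w ∈ D.pts | Inside f w} ≤ 2 * #D.pts → h.1 ≤ f.1)
    (hfst : g.1 ≤ h.1) :
    HasBalancedSepIn (Joined D.edges) D.pts (2 * k + 3) := by
  obtain ⟨hg1, hg2⟩ := D.mem_pts g hg
  have hgs := hb.straddle hg1 hgc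
  have hhs := hb.straddle (D.mem_pts h hh).1 hhc
  have hP : ({g.1, g.2, h.1} : Finset ℕ) ⊆ D.pts := by
    simp [insert_subset_iff, hg1, hg2, (D.mem_pts h hh).1]
  have hcg : CutsChord D.edges (D.sep {g.1, g.2, h.1} g h) g :=
    cutsChord_sep_left (mem_sep_of_mem (by simp)) (mem_sep_of_mem (by simp))
  have hmid : #{w ∈ D.pts | Inside g w ∧ Inside (h.1, g.2) w} ≤
      #{w ∈ D.pts | Inside h w} + 1 + #{w ∈ D.pts | Outside (u, v) w} := by
    calc _ ≤ #({w ∈ D.pts | Inside h w} ∪ {h.2} ∪ {w ∈ D.pts | Outside (u, v) w}) := by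
          refine card_le_card fun w hw => ?_
          rw [mem_filter] at hw
          simp only [mem_union, mem_filter, mem_singleton, hw.1, true_and]
          simp only [Inside, Outside] at hw ⊢
          omega
      _ ≤ _ := by
          have := card_union_le ({w ∈ D.pts | Inside h w} ∪ {h.2}) {w ∈ D.pts | Outside (u, v) w}
          have := card_union_le {w ∈ D.pts | Inside h w} {h.2}
          rw [card_singleton] at this
          omega
  have hout := hb.outside_le
  refine hasBalancedSepIn_of_cutsChord D.lt (sep_subset hP)
    ((card_sep_le hg hh).trans (by have := card_le_three (a := g.1) (b := g.2) (c := h.1); omega))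
    hcg (cutsChord_of_long_short hb hg hh hgc hhc hgmax hhmin hfst) ?_ ?_ ?_ ?_
  · omega
  · exact mul_card_filter_le_of_imp
      (fun w _ hw => by simp only [Inside, Outside] at hw ⊢; omega) hb.inside_le
  · exact mul_card_filter_le_of_imp
      (fun w _ hw => by simp only [Inside, Outside] at hw ⊢; omega) hb.inside_le
  · exact mul_card_filter_le_of_imp (fun w _ hw => hw.1) hgout

theorem hasBalancedSepIn_of_long_short (hb : IsBaseChord D.pts u v) {g h : ℕ × ℕ}
    (hg : g ∈ D.edges) (hh : h ∈ D.edges) (hgc : Crosses (u, v) g) (hhc : Crosses (u, v) h)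
    (hglong : 2 * #D.pts < 3 * #{w ∈ D.pts | Inside g w})
    (hhout : 2 * #D.pts < 3 * #{w ∈ D.pts | Outside h w})
    (hgmax : ∀ f ∈ D.edges, Crosses (u, v) f →
      2 * #D.pts < 3 * #{w ∈ D.pts | Inside f w} → f.1 ≤ g.1)
    (hhmin : ∀ f ∈ D.edges, Crosses (u, v) f →
      3 * #{w ∈ D.pts | Inside f w} ≤ 2 * #D.pts → h.1 ≤ f.1) :
    HasBalancedSepIn (Joined D.edges) D.pts (2 * k + 3) := by
  have hsg := card_inside_add_card_outside_of_mem hg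
  have hsh := card_inside_add_card_outside_of_mem hh
  have hgout : 3 * #{w ∈ D.pts | Outside g w} ≤ 2 * #D.pts := by omega
  have hhin : 3 * #{w ∈ D.pts | Inside h w} + 7 ≤ #D.pts := by omega
  rcases le_or_gt g.1 h.1 with hfst | hfst
  · exact hasBalancedSepIn_of_long_short_of_fst_le hb hg hh hgc hhc hgout hhin hgmax hhmin hfst
  have hgs := hb.straddle (D.mem_pts g hg).1 hgc
  have hhs := hb.straddle (D.mem_pts h hh).1 hhc
  -- `g` has more points inside than `h`, so it does not lie inside `h`
  have hsnd : h.2 < g.2 := by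
    by_contra! hle
    have := card_filter_le_card_filter_of_imp (s := D.pts) (p := Inside g) (q := Inside h)
      fun w _ hw => by simp only [Inside] at hw ⊢; omega
    omega
  refine hasBalancedSepIn_of_crosses hh hg hfst (by omega) hsnd ?_ ?_ ?_ ?_
  · exact mul_card_filter_le_of_imp
      (fun w _ hw => by simp only [Inside] at hw ⊢; omega) hb.inside_le
  · exact mul_card_filter_le_of_imp (q := Inside h)
      (fun w _ hw => by simp only [Inside] at hw ⊢; omega) (by omega)
  · exact mul_card_filter_le_of_imp
      (fun w _ hw => by simp only [Inside, Outside] at hw ⊢; omega) hb.outside_le_two_mul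
  · exact mul_card_filter_le_of_imp
      (fun w _ hw => by simp only [Outside] at hw ⊢; omega) hgout

theorem hasBalancedSepIn_of_isBaseChord (hub : ∀ e ∈ D.edges, ¬ D.IsBalanced e)
    (hb : IsBaseChord D.pts u v) : HasBalancedSepIn (Joined D.edges) D.pts (2 * k + 3) := by
  by_cases hF : ∃ f ∈ D.edges, Crosses (u, v) f
  swap
  · push Not at hF
    exact hasBalancedSepIn_of_forall_not_crosses hb hF
  by_cases hshort : ∃ f ∈ D.edges, Crosses (u, v) f ∧
      3 * #{w ∈ D.pts | Inside f w} ≤ 2 * #D.pts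
  swap
  · push Not at hshort
    obtain ⟨g, hg, hgmax⟩ := exists_max_image {f ∈ D.edges | Crosses (u, v) f} Prod.fst
      (by obtain ⟨f, hf, hc⟩ := hF; exact ⟨f, mem_filter.2 ⟨hf, hc⟩⟩)
    rw [mem_filter] at hg
    exact hasBalancedSepIn_of_max_crosses hb hg.1 hg.2 (hshort g hg.1 hg.2)
      fun f hf hc => hgmax f (mem_filter.2 ⟨hf, hc⟩)
  obtain ⟨h, hh, hhmin⟩ := exists_min_image {f ∈ D.edges | Crosses (u, v) f ∧
      3 * #{w ∈ D.pts | Inside f w} ≤ 2 * #D.pts} Prod.fst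
    (by obtain ⟨f, hf, hc⟩ := hshort; exact ⟨f, mem_filter.2 ⟨hf, hc⟩⟩)
  rw [mem_filter] at hh
  by_cases hlong : ∃ f ∈ D.edges, Crosses (u, v) f ∧
      2 * #D.pts < 3 * #{w ∈ D.pts | Inside f w}
  swap
  · push Not at hlong
    exact hasBalancedSepIn_of_min_crosses hb hh.1 hh.2.1 hh.2.2
      fun f hf hc => hhmin f (mem_filter.2 ⟨hf, hc, hlong f hf hc⟩)
  obtain ⟨g, hg, hgmax⟩ := exists_max_image {f ∈ D.edges | Crosses (u, v) f ∧
      2 * #D.pts < 3 * #{w ∈ D.pts | Inside f w}} Prod.fst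
    (by obtain ⟨f, hf, hc⟩ := hlong; exact ⟨f, mem_filter.2 ⟨hf, hc⟩⟩)
  rw [mem_filter] at hg
  have hhout : 2 * #D.pts < 3 * #{w ∈ D.pts | Outside h w} := by
    by_contra hle
    exact hub h hh.1 ⟨hh.2.2, not_lt.1 hle⟩
  exact hasBalancedSepIn_of_long_short hb hg.1 hh.1 hg.2.1 hh.2.1 hg.2.2 hhout
    (fun f hf hc hl => hgmax f (mem_filter.2 ⟨hf, hc, hl⟩))
    (fun f hf hc hs => hhmin f (mem_filter.2 ⟨hf, hc, hs⟩))

theorem hasBalancedSepIn (D : Drawing k) :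
    HasBalancedSepIn (Joined D.edges) D.pts (2 * k + 3) := by
  by_cases hsmall : #D.pts ≤ 2 * k + 3
  · exact hasBalancedSepIn_of_card_le hsmall
  by_cases hbal : ∃ e ∈ D.edges, D.IsBalanced e
  · obtain ⟨e, he, hbal⟩ := hbal
    exact hasBalancedSepIn_of_isBalanced he hbal
  push Not at hbal
  obtain ⟨u, v, hb⟩ := exists_isBaseChord (t := D.pts) (by omega)
  exact hasBalancedSepIn_of_isBaseChord hbal hb

end Drawing

theorem sym2Cross_of_crosses {n : ℕ} {a b c d : Fin n} (hab : a < b) (hcd : c < d)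
    (h : Crosses (a, b) (c, d)) : Sym2Cross s(a, b) s(c, d) := by
  refine ⟨a, b, c, d, rfl, rfl, ?_⟩
  rw [Interleave, min_eq_left hab.le, max_eq_right hab.le, min_eq_left hcd.le,
    max_eq_right hcd.le]
  simp only [Fin.lt_def]
  exact h

section Graph

variable {k : ℕ} {V : Type*} [Fintype V]

noncomputable def orientedEdges (H : SimpleGraph V) (t : Finset V) (σ : V ≃ Fin (Fintype.card V)) :
    Finset (V × V) :=
  {p ∈ t ×ˢ t | H.Adj p.1 p.2 ∧ σ p.1 < σ p.2}

theorem card_crosses_orientedEdges_le [DecidableEq V] {G H : SimpleGraph V}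
    {σ : V ≃ Fin (Fintype.card V)}
    (hσ : ∀ e ∈ G.edgeFinset,
      (G.edgeFinset.filter (fun f => f ≠ e ∧ Sym2Cross (e.map σ) (f.map σ))).card ≤ k)
    (hHG : H ≤ G) {t : Finset V} {p : V × V} (hp : p ∈ orientedEdges H t σ) :
    #{q ∈ orientedEdges H t σ |
      Crosses ((σ p.1 : ℕ), (σ p.2 : ℕ)) ((σ q.1 : ℕ), (σ q.2 : ℕ))} ≤ k := by
  have hmem : ∀ q ∈ orientedEdges H t σ, G.Adj q.1 q.2 ∧ σ q.1 < σ q.2 := fun q hq => by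
    rw [orientedEdges, mem_filter] at hq
    exact ⟨hHG hq.2.1, hq.2.2⟩
  obtain ⟨hpG, hplt⟩ := hmem p hp
  refine le_trans ?_ (hσ s(p.1, p.2) (by simpa using hpG))
  refine card_le_card_of_injOn (fun q => s(q.1, q.2)) (fun q hq => ?_) ?_
  · rw [mem_coe, mem_filter] at hq
    obtain ⟨hqG, hqlt⟩ := hmem q hq.1
    have hne : s(q.1, q.2) ≠ s(p.1, p.2) := by
      intro heq
      have := hq.2
      rcases Sym2.eq_iff.1 heq with ⟨h1, h2⟩ | ⟨h1, h2⟩ <;>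
        simp only [h1, h2, Crosses] at this <;> omega
    refine mem_coe.2 (mem_filter.2 ⟨by simpa using hqG, hne, ?_⟩)
    rw [Sym2.map_mk, Sym2.map_mk]
    exact sym2Cross_of_crosses hplt hqlt hq.2
  · intro q hq r hr heq
    have hq' := (hmem q (mem_filter.1 hq).1).2
    have hr' := (hmem r (mem_filter.1 hr).1).2
    rcases Sym2.eq_iff.1 heq with ⟨h1, h2⟩ | ⟨h1, h2⟩
    · exact Prod.ext h1 h2
    · rw [h1, h2] at hq'
      exact absurd (hq'.trans hr') (lt_irrefl _)

theorem _root_.IsOuterKPlanar.exists_drawing [DecidableEq V] {G H : SimpleGraph V}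
    (hG : IsOuterKPlanar k G) (t : Finset V) (hHG : H ≤ G) :
    ∃ (ρ : V → ℕ) (D : Drawing k), Set.InjOn ρ t ∧ D.pts = t.image ρ ∧
      ∀ x ∈ t, ∀ y ∈ t, H.Adj x y → Joined D.edges (ρ x) (ρ y) := by
  obtain ⟨σ, hσ⟩ := hG
  set ρ : V → ℕ := fun x => σ x
  have hE : ∀ p ∈ orientedEdges H t σ, p.1 ∈ t ∧ p.2 ∈ t ∧ ρ p.1 < ρ p.2 := fun p hp => by
    rw [orientedEdges, mem_filter, mem_product] at hp
    exact ⟨hp.1.1, hp.1.2, hp.2.2⟩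
  have hmem : ∀ x ∈ t, ∀ y ∈ t, H.Adj x y → ρ x < ρ y →
      (ρ x, ρ y) ∈ (orientedEdges H t σ).image (Prod.map ρ ρ) := fun x hx y hy hxy hlt =>
    mem_image.2 ⟨(x, y), mem_filter.2 ⟨mem_product.2 ⟨hx, hy⟩, hxy, hlt⟩, rfl⟩
  refine ⟨ρ, ⟨t.image ρ, (orientedEdges H t σ).image (Prod.map ρ ρ), ?_, ?_, ?_⟩,
    (Fin.val_injective.comp σ.injective).injOn, rfl, ?_⟩
  · intro f hf
    obtain ⟨p, hp, rfl⟩ := mem_image.1 hf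
    exact ⟨mem_image_of_mem ρ (hE p hp).1, mem_image_of_mem ρ (hE p hp).2.1⟩
  · intro f hf
    obtain ⟨p, hp, rfl⟩ := mem_image.1 hf
    exact (hE p hp).2.2
  · intro f hf
    obtain ⟨p, hp, rfl⟩ := mem_image.1 hf
    rw [filter_image]
    exact card_image_le.trans (card_crosses_orientedEdges_le hσ hHG hp)
  · intro x hx y hy hxy
    rcases ((Fin.val_injective.comp σ.injective).ne hxy.ne).lt_or_gt with hlt | hlt
    · exact Or.inl (hmem x hx y hy hxy hlt)
    · exact Or.inr (hmem y hy x hx hxy.symm hlt)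

end Graph

end OuterKPlanar

/-- The separation number of any outer `k`-planar graph is at most `2k + 3`:
every subgraph has a balanced separation of size at most `2k + 3`. -/
theorem stmt9 (k : ℕ) {V : Type*} [Fintype V] [DecidableEq V]
    (G : SimpleGraph V) (h : IsOuterKPlanar k G) :
    SepNumAtMost G (2 * k + 3) := by
  intro t H hHG
  obtain ⟨ρ, D, hρ, hpts, hjoin⟩ := h.exists_drawing t hHG
  obtain ⟨A, B, hAB, hsep, hcard, hA, hB⟩ := (hpts ▸ D.hasBalancedSepIn).comap hρ hjoin
  exact ⟨A, B, hAB ▸ subset_union_left, hAB ▸ subset_union_right, hAB, hsep, hcard, hA, hB⟩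
end

section
/- In a maximal outer k-quasi-planar drawing on n ≥ 2k−1 vertices labeled v_1,…,v_n in cyclic order, every 'frame' edge is present: for each i and each ℓ with 1 ≤ |ℓ| ≤ k−1 (indices mod n), the edge {v_i, v_{i+ℓ}} belongs to the drawing. -/
open Finset

open scoped Classical

/-- A convex drawing (graph on `Fin n` with vertices in cyclic order `0,…,n-1`)
has no `k` pairwise crossing edges. -/
def NoKPairwiseCross {n : ℕ} (k : ℕ) (G : SimpleGraph (Fin n)) : Prop :=
  ∀ S : Finset (Sym2 (Fin n)), ↑S ⊆ G.edgeSet →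
    (∀ e ∈ S, ∀ f ∈ S, e ≠ f → Sym2Cross e f) → S.card < k

/-- A maximal outer `k`-quasi-planar drawing: no `k` pairwise crossing edges, and
adding any missing chord creates `k` pairwise crossing edges. -/
def MaximalOuterKQP {n : ℕ} (k : ℕ) (G : SimpleGraph (Fin n)) : Prop :=
  NoKPairwiseCross k G ∧
  ∀ a b : Fin n, a ≠ b → ¬ G.Adj a b →
    ¬ NoKPairwiseCross k (G ⊔ SimpleGraph.fromEdgeSet {s(a, b)})

/-!
If the frame chord `{i, i + ℓ}` were missing, maximality would give `k - 1` pairwise crossing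
edges that all cross it. Each of them has an endpoint strictly on the short side of the chord,
pairwise crossing chords share no endpoint, and the short side has only `ℓ - 1 < k - 1` vertices.
-/

lemma Sym2Cross.notMem_of_mem {n : ℕ} {e f : Sym2 (Fin n)} {x : Fin n} (hc : Sym2Cross e f)
    (hx : x ∈ e) : x ∉ f := by
  obtain ⟨a, b, c, d, rfl, rfl, hint⟩ := hc
  simp only [Interleave, Fin.lt_def, Fin.coe_min, Fin.coe_max] at hint
  rw [Sym2.mem_iff] at hx ⊢
  rcases hx with rfl | rfl <;> rintro (rfl | rfl) <;> omega

lemma Sym2Cross.exists_mem_Ioo_and_exists_mem_compl_Icc {n : ℕ} {a b : Fin n}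
    {f : Sym2 (Fin n)} (hab : a < b) (hc : Sym2Cross s(a, b) f) :
    (∃ x ∈ f, x ∈ Ioo a b) ∧ ∃ y ∈ f, y ∈ (Icc a b)ᶜ := by
  obtain ⟨a', b', c, d, he, rfl, hint⟩ := hc
  have hmin : min a' b' = a ∧ max a' b' = b := by
    rcases Sym2.eq_iff.mp he with ⟨rfl, rfl⟩ | ⟨rfl, rfl⟩
    · exact ⟨min_eq_left hab.le, max_eq_right hab.le⟩
    · exact ⟨min_eq_right hab.le, max_eq_left hab.le⟩
  simp only [Interleave, hmin.1, hmin.2] at hint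
  simp only [Sym2.mem_iff, mem_Ioo, mem_compl, mem_Icc, exists_eq_or_imp, exists_eq_left,
    Fin.lt_def, Fin.le_def, Fin.coe_min, Fin.coe_max] at hint ⊢
  omega

lemma card_le_card_of_pairwise_sym2Cross {n : ℕ} {S : Finset (Sym2 (Fin n))}
    {T : Finset (Fin n)} (hS : (S : Set (Sym2 (Fin n))).Pairwise Sym2Cross)
    (hT : ∀ f ∈ S, ∃ x ∈ f, x ∈ T) :
    #S ≤ #T :=
  card_le_card_of_forall_subsingleton (fun f x => x ∈ f)
    (fun f hf => (hT f hf).imp fun _ h => h.symm)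
    fun _ _ _ ⟨he, hxe⟩ _ ⟨hf, hxf⟩ => by_contra fun hef => (hS he hf hef).notMem_of_mem hxe hxf

open Fin.NatCast in
lemma card_lt_of_pairwise_sym2Cross_of_forall_sym2Cross {n : ℕ} [NeZero n] {a : Fin n} {ℓ : ℕ}
    (hℓ₀ : 0 < ℓ) (hℓ : ℓ < n) {S : Finset (Sym2 (Fin n))}
    (hS : (S : Set (Sym2 (Fin n))).Pairwise Sym2Cross)
    (hcross : ∀ f ∈ S, Sym2Cross s(a, a + (ℓ : Fin n)) f) : #S < ℓ := by
  set b := a + (ℓ : Fin n)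
  have hb : (b : ℕ) = (a + ℓ) % n := by simp [b, Fin.val_add, Nat.mod_eq_of_lt hℓ]
  rcases lt_or_ge ((a : ℕ) + ℓ) n with hlt | hge
  · have hab : a < b := by rw [Fin.lt_def, hb, Nat.mod_eq_of_lt hlt]; omega
    calc #S ≤ #(Ioo a b) := card_le_card_of_pairwise_sym2Cross hS
          fun f hf => ((hcross f hf).exists_mem_Ioo_and_exists_mem_compl_Icc hab).1
      _ < ℓ := by rw [Fin.card_Ioo, hb, Nat.mod_eq_of_lt hlt]; omega
  · -- the chord wraps around `0`, so its short side is the complement of `[b, a]`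
    have hb' : (b : ℕ) = a + ℓ - n := by
      rw [hb, Nat.mod_eq_sub_mod hge, Nat.mod_eq_of_lt (by omega)]
    have hba : b < a := by rw [Fin.lt_def, hb']; omega
    calc #S ≤ #(Icc b a)ᶜ := card_le_card_of_pairwise_sym2Cross hS
          fun f hf =>
            ((Sym2.eq_swap ▸ hcross f hf).exists_mem_Ioo_and_exists_mem_compl_Icc hba).2
      _ < ℓ := by rw [card_compl, Fin.card_Icc, Fintype.card_fin, hb']; omega

lemma MaximalOuterKQP.exists_pairwise_sym2Cross_of_not_adj {n k : ℕ} {G : SimpleGraph (Fin n)}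
    (hG : MaximalOuterKQP k G) {a b : Fin n} (hab : a ≠ b) (hadj : ¬G.Adj a b) :
    ∃ S : Finset (Sym2 (Fin n)), (S : Set (Sym2 (Fin n))).Pairwise Sym2Cross ∧
      (∀ f ∈ S, Sym2Cross s(a, b) f) ∧ k - 1 ≤ #S := by
  obtain ⟨S, hSG, hS, hk⟩ : ∃ S : Finset (Sym2 (Fin n)),
      ↑S ⊆ (G ⊔ SimpleGraph.fromEdgeSet {s(a, b)}).edgeSet ∧
      (∀ e ∈ S, ∀ f ∈ S, e ≠ f → Sym2Cross e f) ∧ k ≤ #S := by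
    simpa [NoKPairwiseCross] using hG.2 a b hab hadj
  have hmem : s(a, b) ∈ S := by
    by_contra hnot
    refine (hG.1 S (fun e he => ?_) hS).not_ge hk
    have hGe := hSG he
    rw [SimpleGraph.edgeSet_sup, SimpleGraph.edgeSet_fromEdgeSet] at hGe
    rcases hGe with hGe | ⟨rfl, -⟩
    · exact hGe
    · exact absurd he hnot
  refine ⟨S.erase s(a, b),
    fun e he f hf hef => hS e (mem_of_mem_erase he) f (mem_of_mem_erase hf) hef,
    fun f hf => hS _ hmem f (mem_of_mem_erase hf) (ne_of_mem_erase hf).symm, ?_⟩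
  rw [card_erase_of_mem hmem]
  omega

open Fin.NatCast in
/-- In a maximal outer `k`-quasi-planar drawing on `n ≥ 2k-1` vertices, all
frame edges are present: every chord joining vertices at cyclic distance
`ℓ` with `1 ≤ ℓ ≤ k-1` is an edge. -/
theorem stmt13 (n k : ℕ) [NeZero n] (hn : 2 * k - 1 ≤ n)
    (G : SimpleGraph (Fin n)) (h : MaximalOuterKQP k G)
    (i : Fin n) (ℓ : ℕ) (h1 : 1 ≤ ℓ) (h2 : ℓ ≤ k - 1) :
    G.Adj i (i + (ℓ : Fin n)) := by
  have hℓ : ℓ < n := by omega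
  have hne : i ≠ i + (ℓ : Fin n) := by
    intro hi
    have : ((ℓ : Fin n) : ℕ) = 0 := by rw [← Fin.val_zero n, ← left_eq_add.mp hi]
    rw [Fin.val_natCast, Nat.mod_eq_of_lt hℓ] at this
    omega
  by_contra hadj
  obtain ⟨S, hS, hcross, hk⟩ := h.exists_pairwise_sym2Cross_of_not_adj hne hadj
  have := card_lt_of_pairwise_sym2Cross_of_forall_sym2Cross h1 hℓ hS hcross
  omega
end

section
/- The complete bipartite graph K_{p,q} with p ≥ 3 and q ≥ 5 is not outer 3-quasi-planar: in every cyclic placement of its vertices, some three edges pairwise cross. -/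
open Finset

open scoped Classical

/-! Crossing depends only on the relative order of the endpoints, so outer `k`-quasi-planarity
passes to subgraphs: restrict a placement of the host graph and compress it to consecutive
positions. Hence it suffices to treat `K_{3,5} ⊆ K_{p,q}`. A placement of `K_{3,5}` is a
colouring of 8 points on a circle with 3 red and 5 blue points, and an exhaustive check of
all such colourings finds three pairwise crossing red–blue chords in each. -/

instance {n : ℕ} (a b c d : Fin n) : Decidable (Interleave a b c d) := by
  unfold Interleave; infer_instance

theorem Interleave.symm {n : ℕ} {a b c d : Fin n} (h : Interleave a b c d) :
    Interleave c d a b :=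
  Or.symm h

theorem StrictMono.interleave {m n : ℕ} {g : Fin m → Fin n} (hg : StrictMono g)
    {a b c d : Fin m} (h : Interleave a b c d) : Interleave (g a) (g b) (g c) (g d) := by
  simp only [Interleave, ← hg.monotone.map_min, ← hg.monotone.map_max, hg.lt_iff_lt]
  exact h

theorem Sym2Cross.symm {n : ℕ} {e f : Sym2 (Fin n)} (h : Sym2Cross e f) : Sym2Cross f e :=
  let ⟨a, b, c, d, he, hf, h⟩ := h
  ⟨c, d, a, b, hf, he, h.symm⟩

theorem Sym2Cross.ne {n : ℕ} {e f : Sym2 (Fin n)} (h : Sym2Cross e f) : e ≠ f := by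
  obtain ⟨a, b, c, d, rfl, rfl, h⟩ := h
  intro he
  have hmin : min a b = min c d := by
    rcases Sym2.eq_iff.mp he with ⟨rfl, rfl⟩ | ⟨rfl, rfl⟩
    · rfl
    · exact min_comm _ _
  rcases h with ⟨h, -⟩ | ⟨h, -⟩ <;> exact (hmin ▸ h).false

theorem StrictMono.sym2Cross {m n : ℕ} {g : Fin m → Fin n} (hg : StrictMono g)
    {e f : Sym2 (Fin m)} (h : Sym2Cross e f) : Sym2Cross (e.map g) (f.map g) := by
  obtain ⟨a, b, c, d, rfl, rfl, h⟩ := h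
  exact ⟨g a, g b, g c, g d, Sym2.map_mk .., Sym2.map_mk .., hg.interleave h⟩

theorem Function.Embedding.exists_equiv_fin_strictMono_comp {V : Type*} [Fintype V] {m : ℕ}
    (τ : V ↪ Fin m) :
    ∃ (σ : V ≃ Fin (Fintype.card V)) (g : Fin (Fintype.card V) → Fin m),
      StrictMono g ∧ ∀ v, g (σ v) = τ v := by
  have hcard : #(univ.map τ) = Fintype.card V := card_map τ
  set e := (univ.map τ).orderIsoOfFin hcard
  let σ' : V → Fin (Fintype.card V) := fun v => e.symm ⟨τ v, mem_map_of_mem τ (mem_univ v)⟩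
  have hσ' : σ'.Bijective := by
    refine (Fintype.bijective_iff_injective_and_card σ').mpr ⟨fun v w h => ?_, by simp⟩
    simpa [σ'] using h
  refine ⟨.ofBijective σ' hσ', fun i => e i, fun i j hij => ?_, fun v => by simp [σ']⟩
  simpa using hij

theorem IsOuterKQuasiPlanar.of_copy {V W : Type*} [Fintype V] [DecidableEq V] [Fintype W]
    [DecidableEq W] {G : SimpleGraph V} {H : SimpleGraph W} {k : ℕ} (c : G.Copy H)
    (hH : IsOuterKQuasiPlanar k H) : IsOuterKQuasiPlanar k G := by
  obtain ⟨σH, hσH⟩ := hH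
  obtain ⟨σ, g, hg, hgσ⟩ := (c.toEmbedding.trans σH.toEmbedding).exists_equiv_fin_strictMono_comp
  have hmap : ∀ e : Sym2 V, (e.map c).map σH = (e.map σ).map g := fun e => by
    simp only [Sym2.map_map]
    congr 1
    funext v
    exact (hgσ v).symm
  refine ⟨σ, fun S hS hcross => ?_⟩
  have hinj : Function.Injective (Sym2.map c) := Sym2.map.injective c.injective
  rw [← card_image_of_injective S hinj]
  refine hσH (S.image (Sym2.map c)) ?_ ?_
  · rintro _ he
    obtain ⟨e, heS, rfl⟩ := mem_image.mp he
    exact c.toHom.map_mem_edgeSet (hS heS)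
  · simp only [mem_image]
    rintro _ ⟨e, he, rfl⟩ _ ⟨f, hf, rfl⟩ hne
    rw [hmap, hmap]
    exact hg.sym2Cross (hcross e he f hf (ne_of_apply_ne _ hne))

def SimpleGraph.completeBipartiteGraphEmbedding {α β γ δ : Type*} (f : α ↪ γ) (g : β ↪ δ) :
    completeBipartiteGraph α β ↪g completeBipartiteGraph γ δ where
  toEmbedding := f.sumMap g
  map_rel_iff' := by rintro (a | b) (a' | b') <;> simp

theorem not_isOuterKQuasiPlanar_three_of_crossing_triples {V : Type*} [Fintype V]
    [DecidableEq V] {G : SimpleGraph V}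
    (h : ∀ σ : V ≃ Fin (Fintype.card V), ∃ e₁ ∈ G.edgeSet, ∃ e₂ ∈ G.edgeSet, ∃ e₃ ∈ G.edgeSet,
      Sym2Cross (e₁.map σ) (e₂.map σ) ∧ Sym2Cross (e₁.map σ) (e₃.map σ) ∧
        Sym2Cross (e₂.map σ) (e₃.map σ)) :
    ¬ IsOuterKQuasiPlanar 3 G := by
  rintro ⟨σ, hσ⟩
  obtain ⟨e₁, h₁, e₂, h₂, e₃, h₃, c₁₂, c₁₃, c₂₃⟩ := h σ
  have n₁₂ : e₁ ≠ e₂ := ne_of_apply_ne _ c₁₂.ne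
  have n₁₃ : e₁ ≠ e₃ := ne_of_apply_ne _ c₁₃.ne
  have n₂₃ : e₂ ≠ e₃ := ne_of_apply_ne _ c₂₃.ne
  have hcard : #{e₁, e₂, e₃} = 3 := card_eq_three.mpr ⟨e₁, e₂, e₃, n₁₂, n₁₃, n₂₃, rfl⟩
  refine (hσ {e₁, e₂, e₃} ?_ ?_).ne hcard
  · simp [Set.insert_subset_iff, h₁, h₂, h₃]
  · simp only [mem_insert, mem_singleton]
    rintro _ (rfl | rfl | rfl) _ (rfl | rfl | rfl) hne <;>
      first
      | exact absurd rfl hne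
      | assumption
      | exact Sym2Cross.symm ‹_›

-- Each condition sits right after its quantifier so that `decide` prunes the search early.
theorem exists_three_crossing_bichromatic_chords :
    ∀ red : Fin 8 → Bool, #{i | red i} = 3 →
      ∃ a₁, red a₁ ∧ ∃ b₁, red b₁ = false ∧ ∃ a₂, red a₂ ∧ ∃ b₂, red b₂ = false ∧
        Interleave a₁ b₁ a₂ b₂ ∧ ∃ a₃, red a₃ ∧ ∃ b₃, red b₃ = false ∧
          Interleave a₁ b₁ a₃ b₃ ∧ Interleave a₂ b₂ a₃ b₃ := by
  set_option maxRecDepth 10000 in decide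

theorem not_isOuterKQuasiPlanar_three_completeBipartiteGraph_fin_three_fin_five :
    ¬ IsOuterKQuasiPlanar 3 (completeBipartiteGraph (Fin 3) (Fin 5)) := by
  refine not_isOuterKQuasiPlanar_three_of_crossing_triples fun σ => ?_
  generalize hn : Fintype.card (Fin 3 ⊕ Fin 5) = n at σ
  obtain rfl : n = 8 := by simpa using hn.symm
  set red : Fin 8 → Bool := fun i => (σ.symm i).isLeft
  have hred : #{i | red i} = 3 := by
    rw [card_equiv σ.symm (t := {v | v.isLeft}) (by simp [red])]
    decide
  obtain ⟨a₁, ha₁, b₁, hb₁, a₂, ha₂, b₂, hb₂, h₁₂, a₃, ha₃, b₃, hb₃, h₁₃, h₂₃⟩ :=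
    exists_three_crossing_bichromatic_chords red hred
  have hedge : ∀ a b, red a → red b = false →
      s(σ.symm a, σ.symm b) ∈ (completeBipartiteGraph (Fin 3) (Fin 5)).edgeSet := by
    intro a b ha hb
    cases hu : σ.symm a <;> cases hw : σ.symm b <;> simp_all [red]
  have hmap : ∀ a b, s(σ.symm a, σ.symm b).map σ = s(a, b) := by simp
  refine ⟨_, hedge a₁ b₁ ha₁ hb₁, _, hedge a₂ b₂ ha₂ hb₂, _, hedge a₃ b₃ ha₃ hb₃, ?_⟩
  simp only [hmap]
  exact ⟨⟨_, _, _, _, rfl, rfl, h₁₂⟩, ⟨_, _, _, _, rfl, rfl, h₁₃⟩, ⟨_, _, _, _, rfl, rfl, h₂₃⟩⟩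

/-- `K_{p,q}` with `p ≥ 3` and `q ≥ 5` is not outer 3-quasi-planar. -/
theorem stmt15 (p q : ℕ) (hp : 3 ≤ p) (hq : 5 ≤ q) :
    ¬ IsOuterKQuasiPlanar 3 (completeBipartiteGraph (Fin p) (Fin q)) := fun h =>
  not_isOuterKQuasiPlanar_three_completeBipartiteGraph_fin_three_fin_five <| h.of_copy
    (SimpleGraph.completeBipartiteGraphEmbedding (Fin.castLEEmb hp) (Fin.castLEEmb hq)).toCopy
end
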